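/- arXiv:math/0508397 — 5 statements merged into one kernel-verified Lean document; each statement's English description precedes it below -/
import Mathlib

section
/- If a structure on the graded set X = {0} ∪ X_1 ∪ X_2 ∪ ... (with |X_1| = 2, |X_i| = 4 for i ≥ 2) is given by choosing, for each i ≥ 1, a C_8 or C_4 ∪ C_4 covering structure between X_{i+1} and X_{i+2}, together with the standard structure on X_{0,2}, then the resulting relation defines a confluent binomial poset with atomic sequence (1,1,2,2,2,...) if and only if there is no i and no 2+2 partition of X_{i+1} which is simultaneously an induced cover partition and an induced co-cover partition. -/
open Relation Filter Topology

/-- The set of saturated chains from `x` to `y`: lists whose consecutive entries are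
cover relations, starting at `x` and ending at `y`.  A chain of `n + 1` elements
corresponds to an interval of length `n`. -/
def CovChains {P : Type*} [PartialOrder P] (x y : P) : Set (List P) :=
  {l | l.Chain' (· ⋖ ·) ∧ l.head? = some x ∧ l.getLast? = some y}

/-- `x` has rank `n` over the bottom element `b` : some saturated chain from `b` to `x`
has `n + 1` elements. -/
def HasRankFrom {P : Type*} [PartialOrder P] (b x : P) (n : ℕ) : Prop :=
  ∃ l ∈ CovChains b x, l.length = n + 1

/-- The rank level `X_i`. -/
def levelSet {P : Type*} [PartialOrder P] (b : P) (i : ℕ) : Set P :=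
  {x | HasRankFrom b x i}

/-- A poset is strongly confluent if it is the union of the intervals `[⊥, x i]` along
an infinite (strictly increasing) chain `x 1 < x 2 < ...`. -/
def StronglyConfluent (P : Type*) [Preorder P] : Prop :=
  ∃ x : ℕ → P, StrictMono x ∧ ∀ p : P, ∃ i, p ≤ x i

/-- An (infinite, downward bounded, directed, locally finite) binomial poset with bottom
element `b` and atomic function `A` : graded, with intervals of every length, where the
number of maximal chains in an interval only depends on its length, and every `n`-interval
(`n ≥ 1`) has exactly `A n` atoms. -/
structure IsBinomialPoset (P : Type*) [PartialOrder P] (b : P) (A : ℕ → ℕ) : Prop where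
  bot_le : ∀ x : P, b ≤ x
  directed : ∀ x y : P, ∃ z : P, x ≤ z ∧ y ≤ z
  locFin : ∀ x y : P, (Set.Icc x y).Finite
  chain_nonempty : ∀ x y : P, x ≤ y → (CovChains x y).Nonempty
  graded : ∀ x y : P, ∀ l ∈ CovChains x y, ∀ l' ∈ CovChains x y, l.length = l'.length
  allLengths : ∀ n : ℕ, ∃ x : P, HasRankFrom b x n
  count : ∀ (x y x' y' : P) (n : ℕ), (∃ l ∈ CovChains x y, l.length = n + 1) →
    (∃ l ∈ CovChains x' y', l.length = n + 1) →
    (CovChains x y).ncard = (CovChains x' y').ncard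
  atoms : ∀ (x y : P) (n : ℕ), 1 ≤ n → (∃ l ∈ CovChains x y, l.length = n + 1) →
    {z : P | x ⋖ z ∧ z ≤ y}.ncard = A n

/-- The generalised factorial function `B n = A 1 * A 2 * ... * A n`. -/
def Bfun (A : ℕ → ℕ) (n : ℕ) : ℕ := ∏ i ∈ Finset.Icc 1 n, A i

/-- A bundled poset with a distinguished bottom element. -/
structure BinPoset where
  carrier : Type
  [po : PartialOrder carrier]
  bot : carrier

attribute [instance] BinPoset.po

/-- The atomic sequence `(1, 1, 2, 2, 2, ...)`. -/
def A112 : ℕ → ℕ := fun n => if n ≤ 2 then 1 else 2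
/-- The partial order generated by a cover-step relation `r` that strictly increases a
rank function `f`. -/
def covOrder {α : Type*} (r : α → α → Prop) (f : α → ℕ)
    (hf : ∀ a b : α, r a b → f a < f b) : PartialOrder α where
  le := Relation.ReflTransGen r
  le_refl _ := Relation.ReflTransGen.refl
  le_trans _ _ _ h h' := Relation.ReflTransGen.trans h h'
  le_antisymm a b hab hba := by
    have key : ∀ x y : α, Relation.ReflTransGen r x y → f x ≤ f y := by
      intro x y h
      induction h with
      | refl => exact le_refl _
      | tail _ hr ih => exact ih.trans (hf _ _ hr).le
    rcases hab.cases_head with h | ⟨c, hc, hcb⟩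
    · exact h
    · have h1 := hf _ _ hc
      have h2 := key _ _ hcb
      have h3 := key _ _ hba
      omega
/-- The sizes of the rank levels for the atomic sequence `(1,1,2,2,2,...)` :
`|X_0| = 1`, `|X_1| = 2`, `|X_i| = 4` for `i ≥ 2`. -/
def sz : ℕ → ℕ
  | 0 => 1
  | 1 => 2
  | _ => 4

/-- The graded carrier set `X = X_0 ∪ X_1 ∪ X_2 ∪ ...`, the level `X_i` having `sz i`
elements. -/
def SecP : Type := {p : ℕ × Fin 4 // p.2.val < sz p.1}

/-- The cover-step relation determined by the chosen covering structures
`E i : X_i → X_{i+1} → Prop`. -/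
def SecStep (E : ℕ → Fin 4 → Fin 4 → Prop) (p q : SecP) : Prop :=
  q.1.1 = p.1.1 + 1 ∧ E p.1.1 p.1.2 q.1.2

/-- The order generated on `X` by the chosen covering structures. -/
def secOrder (E : ℕ → Fin 4 → Fin 4 → Prop) : PartialOrder SecP :=
  covOrder (SecStep E) (fun p => p.1.1) (by rintro a b ⟨h, -⟩; show a.1.1 < b.1.1; omega)

/-- The bottom element `0̂` of the graded carrier. -/
def secBot : SecP := ⟨(0, 0), by simp [sz]⟩

section AuxSec

variable {E : ℕ → Fin 4 → Fin 4 → Prop}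

lemma sz_eq_four {n : ℕ} (h : 2 ≤ n) : sz n = 4 := by
  match n, h with
  | (k+2), _ => rfl

lemma sz_pos (n : ℕ) : 0 < sz n := by
  match n with
  | 0 => decide
  | 1 => decide
  | (k+2) => show 0 < 4; decide

lemma secext {p q : SecP} (h1 : p.1.1 = q.1.1) (h2 : p.1.2 = q.1.2) : p = q :=
  Subtype.ext (Prod.ext h1 h2)

lemma rtg_lev {p q : SecP} (h : Relation.ReflTransGen (SecStep E) p q) :
    p.1.1 ≤ q.1.1 := by
  induction h with
  | refl => exact le_rfl
  | tail _ hr ih => have := hr.1; omega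

lemma rtg_lev_eq {p q : SecP} (h : Relation.ReflTransGen (SecStep E) p q)
    (hl : q.1.1 ≤ p.1.1) : p = q := by
  rcases h.cases_head with h | ⟨c, hc, hcq⟩
  · exact h
  · have h1 := hc.1
    exact absurd (rtg_lev hcq) (by omega)

lemma rtg_head {p q : SecP} (h : Relation.ReflTransGen (SecStep E) p q)
    (hl : p.1.1 < q.1.1) :
    ∃ c, SecStep E p c ∧ Relation.ReflTransGen (SecStep E) c q := by
  rcases h.cases_head with h | hc
  · exfalso; rw [h] at hl; exact lt_irrefl _ hl
  · exact hc

lemma rtg_one {p q : SecP} (h : Relation.ReflTransGen (SecStep E) p q)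
    (hl : q.1.1 = p.1.1 + 1) : SecStep E p q := by
  obtain ⟨c, hc, hcq⟩ := rtg_head h (by omega)
  have h1 := hc.1
  have : c = q := rtg_lev_eq hcq (by omega)
  exact this ▸ hc

lemma lt_lev {a b : SecP} (h1 : Relation.ReflTransGen (SecStep E) a b) (h2 : a ≠ b) :
    a.1.1 < b.1.1 := by
  rcases Nat.lt_or_ge a.1.1 b.1.1 with h | h
  · exact h
  · exact absurd (rtg_lev_eq h1 h) h2

lemma sec_covby_iff {a b : SecP} :
    letI := secOrder E
    (a ⋖ b ↔ SecStep E a b) := by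
  letI := secOrder E
  constructor
  · rintro ⟨hlt, hmax⟩
    have hle : Relation.ReflTransGen (SecStep E) a b := hlt.le
    have hne : a ≠ b := ne_of_lt hlt
    obtain ⟨c, hc, hcb⟩ := rtg_head hle (lt_lev hle hne)
    by_cases hcb' : c = b
    · exact hcb' ▸ hc
    · exfalso
      refine hmax (c := c) ?_ ?_
      · exact lt_of_le_of_ne (Relation.ReflTransGen.single hc)
          (fun h => by have := hc.1; rw [h] at this; omega)
      · exact lt_of_le_of_ne hcb hcb'
  · intro h
    constructor
    · exact lt_of_le_of_ne (Relation.ReflTransGen.single h)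
        (fun he => by have := h.1; rw [he] at this; omega)
    · intro c hac hcb
      have h1 : a.1.1 < c.1.1 := lt_lev hac.le (ne_of_lt hac)
      have h2 : c.1.1 < b.1.1 := lt_lev hcb.le (ne_of_lt hcb)
      have := h.1
      omega

lemma mem_covChains_iff {x y : SecP} {l : List SecP} :
    l ∈ @CovChains SecP (secOrder E) x y ↔
      (List.Chain' (SecStep E) l ∧ l.head? = some x ∧ l.getLast? = some y) := by
  constructor
  · rintro ⟨hc, hh, hl⟩
    exact ⟨hc.imp (fun _ _ h => sec_covby_iff.mp h), hh, hl⟩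
  · rintro ⟨hc, hh, hl⟩
    exact ⟨hc.imp (fun _ _ h => sec_covby_iff.mpr h), hh, hl⟩

lemma chains_shape : ∀ (l : List SecP) (x y : SecP),
    List.Chain' (SecStep E) l → l.head? = some x → l.getLast? = some y →
    Relation.ReflTransGen (SecStep E) x y ∧ y.1.1 + 1 = x.1.1 + l.length := by
  intro l
  induction l with
  | nil => intro x y _ h _; simp at h
  | cons a t ih =>
    intro x y hc hh hl
    have ha : a = x := by simpa using hh
    subst ha
    cases t with
    | nil =>
      have : a = y := by simpa using hl
      subst this
      exact ⟨Relation.ReflTransGen.refl, by simp⟩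
    | cons b t' =>
      replace hc := List.isChain_cons_cons.mp hc
      have hl' : (b :: t').getLast? = some y := by
        rwa [List.getLast?_cons_cons] at hl
      obtain ⟨h1, h2⟩ := ih b y hc.2 rfl hl'
      have hb := hc.1.1
      refine ⟨Relation.ReflTransGen.head hc.1 h1, by simp at h2 ⊢; omega⟩

lemma covChains_shape {x y : SecP} {l : List SecP}
    (h : l ∈ @CovChains SecP (secOrder E) x y) :
    Relation.ReflTransGen (SecStep E) x y ∧ y.1.1 + 1 = x.1.1 + l.length := by
  rw [mem_covChains_iff] at h
  exact chains_shape l x y h.1 h.2.1 h.2.2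

end AuxSec
section AuxSec2

variable {E : ℕ → Fin 4 → Fin 4 → Prop}

lemma finset22 : ∀ s t : Finset (Fin 4), s.card = 2 → t.card = 2 → s ≠ t → s ≠ tᶜ →
    (s ∩ t).card = 1 := by decide

lemma set22 {S T : Set (Fin 4)} (hS : S.ncard = 2) (hT : T.ncard = 2)
    (h1 : S ≠ T) (h2 : S ≠ Tᶜ) : ∃! w, w ∈ S ∧ w ∈ T := by
  classical
  have hSf : S.Finite := S.toFinite
  have hTf : T.Finite := T.toFinite
  have hi : (S ∩ T).Finite := (S ∩ T).toFinite
  have key : hi.toFinset.card = 1 := by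
    rw [Set.Finite.toFinset_inter hSf hTf hi]
    apply finset22
    · rw [← Set.ncard_eq_toFinset_card S hSf]; exact hS
    · rw [← Set.ncard_eq_toFinset_card T hTf]; exact hT
    · intro h
      apply h1
      have := congrArg (fun u : Finset (Fin 4) => (u : Set (Fin 4))) h
      simpa [Set.Finite.coe_toFinset] using this
    · intro h
      apply h2
      have := congrArg (fun u : Finset (Fin 4) => (u : Set (Fin 4))) h
      simpa [Set.Finite.coe_toFinset, Finset.coe_compl] using this
  have : (S ∩ T).ncard = 1 := by rw [Set.ncard_eq_toFinset_card _ hi]; exact key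
  obtain ⟨a, ha⟩ := Set.ncard_eq_one.mp this
  refine ⟨a, ?_, ?_⟩
  · have : a ∈ S ∩ T := ha ▸ rfl
    exact this
  · intro w hw
    have : w ∈ S ∩ T := hw
    rw [ha] at this
    exact this

lemma covers_eq (x : SecP) :
    {t : Fin 4 | t.val < sz (x.1.1 + 1) ∧ E x.1.1 x.1.2 t} =
      (fun w : SecP => w.1.2) '' {w : SecP | SecStep E x w} := by
  ext t
  constructor
  · rintro ⟨h1, h2⟩
    exact ⟨⟨(x.1.1 + 1, t), h1⟩, ⟨rfl, h2⟩, rfl⟩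
  · rintro ⟨w, ⟨hw1, hw2⟩, rfl⟩
    exact ⟨hw1 ▸ w.2, hw2⟩

lemma covers_inj (x : SecP) :
    Set.InjOn (fun w : SecP => w.1.2) {w : SecP | SecStep E x w} := by
  rintro a ha b hb h
  exact secext (by rw [ha.1, hb.1]) h

lemma covers_finite (x : SecP) : {w : SecP | SecStep E x w}.Finite := by
  apply Set.Finite.of_finite_image (f := fun w : SecP => w.1.2) ?_ (covers_inj x)
  exact Set.Finite.subset Set.finite_univ (Set.subset_univ _)

lemma covers_ncard (hE0 : ∀ z : Fin 4, z.val < sz 1 → E 0 0 z)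
    (hE1b : ∀ z : Fin 4, z.val < sz 1 → {w : Fin 4 | E 1 z w}.ncard = 2)
    (hreg : ∀ i : ℕ, 1 ≤ i → ∀ a : Fin 4,
      {t : Fin 4 | E (i + 1) a t}.ncard = 2 ∧ {s : Fin 4 | E (i + 1) s a}.ncard = 2)
    (x : SecP) : {w : SecP | SecStep E x w}.ncard = 2 := by
  have h := Set.ncard_image_of_injOn (covers_inj (E := E) x)
  rw [← covers_eq] at h
  rw [← h]
  rcases x with ⟨⟨i, a⟩, ha⟩
  match i with
  | 0 =>
    have ha0 : a = 0 := Fin.ext (by simpa [sz] using ha)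
    subst ha0
    have : {t : Fin 4 | t.val < sz (0 + 1) ∧ E 0 0 t} = {t : Fin 4 | t.val < 2} := by
      ext t
      constructor
      · rintro ⟨h1, _⟩; exact h1
      · intro h; exact ⟨h, hE0 t h⟩
    rw [this]
    have : {t : Fin 4 | t.val < 2} = {(0 : Fin 4), 1} := by
      ext t
      simp only [Set.mem_setOf_eq, Set.mem_insert_iff, Set.mem_singleton_iff]
      constructor
      · intro h
        have h' : t.val = 0 ∨ t.val = 1 := by omega
        rcases h' with h' | h'
        · exact Or.inl (Fin.ext h')
        · exact Or.inr (Fin.ext h')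
      · rintro (rfl | rfl) <;> decide
    rw [this]
    exact Set.ncard_pair (by decide)
  | 1 =>
    have : {t : Fin 4 | t.val < sz (1 + 1) ∧ E 1 a t} = {t : Fin 4 | E 1 a t} := by
      ext t
      simp [sz, t.isLt]
    rw [this]
    exact hE1b a ha
  | (k+2) =>
    have : {t : Fin 4 | t.val < sz (k + 2 + 1) ∧ E (k+2) a t} = {t : Fin 4 | E (k+2) a t} := by
      ext t
      have := t.isLt
      simp [sz_eq_four (show 2 ≤ k + 2 + 1 by omega), this]
    rw [this]
    exact (hreg (k+1) (by omega) a).1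

lemma parent (hE0 : ∀ z : Fin 4, z.val < sz 1 → E 0 0 z)
    (hE1a : ∀ w : Fin 4, ∃! z : Fin 4, z.val < sz 1 ∧ E 1 z w)
    (hreg : ∀ i : ℕ, 1 ≤ i → ∀ a : Fin 4,
      {t : Fin 4 | E (i + 1) a t}.ncard = 2 ∧ {s : Fin 4 | E (i + 1) s a}.ncard = 2)
    (p : SecP) (hp : 1 ≤ p.1.1) : ∃ q : SecP, SecStep E q p := by
  rcases p with ⟨⟨i, a⟩, ha⟩
  match i, ha, hp with
  | 1, ha, _ => exact ⟨secBot, rfl, hE0 a ha⟩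
  | 2, ha, _ =>
    obtain ⟨z, ⟨hz1, hz2⟩, _⟩ := hE1a a
    exact ⟨⟨(1, z), hz1⟩, rfl, hz2⟩
  | (k+3), ha, _ =>
    obtain ⟨s, hs⟩ := Set.nonempty_of_ncard_ne_zero
      (by rw [(hreg (k+1) (by omega) a).2]; omega)
    exact ⟨⟨(k+2, s), by rw [sz_eq_four (by omega)]; exact s.isLt⟩, rfl, hs⟩

end AuxSec2
section AuxSec3

variable {E : ℕ → Fin 4 → Fin 4 → Prop}

/-- unique middle element, under the good hypothesis -/
lemma sec_mid (hE0 : ∀ z : Fin 4, z.val < sz 1 → E 0 0 z)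
    (hE1a : ∀ w : Fin 4, ∃! z : Fin 4, z.val < sz 1 ∧ E 1 z w)
    (hE1b : ∀ z : Fin 4, z.val < sz 1 → {w : Fin 4 | E 1 z w}.ncard = 2)
    (hreg : ∀ i : ℕ, 1 ≤ i → ∀ a : Fin 4,
      {t : Fin 4 | E (i + 1) a t}.ncard = 2 ∧ {s : Fin 4 | E (i + 1) s a}.ncard = 2)
    (hgood : ∀ i : ℕ, 1 ≤ i → ∀ z y : Fin 4, z.val < sz i →
      {x : Fin 4 | E i z x} ≠ {x : Fin 4 | E (i + 1) x y} ∧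
      {x : Fin 4 | E i z x} ≠ {x : Fin 4 | E (i + 1) x y}ᶜ)
    (x y : SecP) (h : y.1.1 = x.1.1 + 2) :
    ∃! w : SecP, SecStep E x w ∧ SecStep E w y := by
  rcases x with ⟨⟨i, a⟩, ha⟩
  rcases y with ⟨⟨j, c⟩, hc⟩
  have hj : j = i + 2 := h
  subst hj
  match i, ha with
  | 0, ha =>
    have ha0 : a = 0 := Fin.ext (by simpa [sz] using ha)
    subst ha0
    obtain ⟨z, ⟨hz1, hz2⟩, hzu⟩ := hE1a c
    refine ⟨⟨(1, z), hz1⟩, ⟨⟨rfl, hE0 z hz1⟩, ⟨rfl, hz2⟩⟩, ?_⟩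
    rintro w ⟨⟨hw1, _⟩, ⟨_, hw2⟩⟩
    refine secext (by rw [hw1]) ?_
    have hv : w.1.2.val < sz 1 := by
      have := w.2
      rw [hw1] at this
      exact this
    have hw2' : E 1 w.1.2 c := by
      have h1 : w.1.1 = 1 := hw1
      rw [h1] at hw2
      exact hw2
    exact hzu w.1.2 ⟨hv, hw2'⟩
  | (k+1), ha =>
    have hS : {t : Fin 4 | E (k+1) a t}.ncard = 2 := by
      match k with
      | 0 => exact hE1b a ha
      | (m+1) => exact (hreg (m+1) (by omega) a).1
    have hT : {t : Fin 4 | E (k+1+1) t c}.ncard = 2 := (hreg (k+1) (by omega) c).2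
    obtain ⟨h1, h2⟩ := hgood (k+1) (by omega) a c ha
    obtain ⟨t, ⟨ht1, ht2⟩, htu⟩ := set22 hS hT h1 h2
    refine ⟨⟨(k+2, t), by rw [sz_eq_four (by omega)]; exact t.isLt⟩,
      ⟨⟨rfl, ht1⟩, ⟨rfl, ht2⟩⟩, ?_⟩
    rintro w ⟨⟨hw1, hwe⟩, ⟨_, hwe2⟩⟩
    refine secext (by rw [hw1]) ?_
    have hwe2' : E (k+1+1) w.1.2 c := by
      have h1 : w.1.1 = k+1+1 := hw1
      rw [h1] at hwe2
      exact hwe2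
    exact htu w.1.2 ⟨hwe, hwe2'⟩

lemma sec_up (hE0 : ∀ z : Fin 4, z.val < sz 1 → E 0 0 z)
    (hE1a : ∀ w : Fin 4, ∃! z : Fin 4, z.val < sz 1 ∧ E 1 z w)
    (hE1b : ∀ z : Fin 4, z.val < sz 1 → {w : Fin 4 | E 1 z w}.ncard = 2)
    (hreg : ∀ i : ℕ, 1 ≤ i → ∀ a : Fin 4,
      {t : Fin 4 | E (i + 1) a t}.ncard = 2 ∧ {s : Fin 4 | E (i + 1) s a}.ncard = 2)
    (hgood : ∀ i : ℕ, 1 ≤ i → ∀ z y : Fin 4, z.val < sz i →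
      {x : Fin 4 | E i z x} ≠ {x : Fin 4 | E (i + 1) x y} ∧
      {x : Fin 4 | E i z x} ≠ {x : Fin 4 | E (i + 1) x y}ᶜ)
    (x y : SecP) (h : x.1.1 + 2 ≤ y.1.1) :
    Relation.ReflTransGen (SecStep E) x y := by
  obtain ⟨n, hn⟩ : ∃ n, y.1.1 = x.1.1 + 2 + n := ⟨y.1.1 - x.1.1 - 2, by omega⟩
  clear h
  induction n generalizing y with
  | zero =>
    obtain ⟨w, ⟨h1, h2⟩, _⟩ := sec_mid hE0 hE1a hE1b hreg hgood x y hn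
    exact (Relation.ReflTransGen.single h1).tail h2
  | succ k ih =>
    obtain ⟨q, hq⟩ := parent hE0 hE1a hreg y (by omega)
    have hqlev : q.1.1 = x.1.1 + 2 + k := by have := hq.1; omega
    exact (ih q hqlev).tail hq

lemma levels_finite (N : ℕ) : {p : SecP | p.1.1 ≤ N}.Finite := by
  apply Set.Finite.of_finite_image (f := fun p : SecP => p.1)
  · apply Set.Finite.subset (Set.Finite.prod (Set.finite_Iic N) Set.finite_univ)
    rintro q ⟨p, hp, rfl⟩
    exact Set.mem_prod.mpr ⟨hp, trivial⟩
  · exact fun a _ b _ h => Subtype.ext h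

lemma chain_ex {x y : SecP} (h : Relation.ReflTransGen (SecStep E) x y) :
    ∃ l ∈ @CovChains SecP (secOrder E) x y, l.length + x.1.1 = y.1.1 + 1 := by
  obtain ⟨l, hc, hl⟩ := List.exists_isChain_cons_of_relationReflTransGen h
  have hmem : (x :: l) ∈ @CovChains SecP (secOrder E) x y := by
    rw [mem_covChains_iff]
    refine ⟨hc, rfl, ?_⟩
    rw [List.getLast?_eq_getLast (List.cons_ne_nil _ _)]
    rw [hl]
  refine ⟨x :: l, hmem, ?_⟩
  have := (covChains_shape hmem).2
  omega

lemma covChains_self (x : SecP) :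
    @CovChains SecP (secOrder E) x x = {[x]} := by
  ext l
  rw [Set.mem_singleton_iff, mem_covChains_iff]
  constructor
  · rintro ⟨hc, hh, hl⟩
    obtain ⟨_, hlen⟩ := chains_shape l x x hc hh hl
    have : l.length = 1 := by omega
    obtain ⟨a, rfl⟩ := List.length_eq_one_iff.mp this
    have : a = x := by simpa using hh
    rw [this]
  · rintro rfl
    exact ⟨List.isChain_singleton x, rfl, rfl⟩

lemma covChains_decomp (x y : SecP) (h : x.1.1 < y.1.1) :
    @CovChains SecP (secOrder E) x y =
      ⋃ w ∈ {w : SecP | SecStep E x w ∧ Relation.ReflTransGen (SecStep E) w y},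
        (List.cons x '' @CovChains SecP (secOrder E) w y) := by
  ext l
  simp only [Set.mem_iUnion, Set.mem_image, Set.mem_setOf_eq, exists_prop]
  rw [mem_covChains_iff]
  constructor
  · rintro ⟨hc, hh, hl⟩
    match l with
    | [] => simp at hh
    | [a] =>
      have h1 : a = x := by simpa using hh
      have h2 : a = y := by simpa using hl
      exfalso
      rw [h1] at h2
      rw [h2] at h
      exact lt_irrefl _ h
    | a :: b :: t =>
      have ha : a = x := by simpa using hh
      subst ha
      replace hc := List.isChain_cons_cons.mp hc
      have hl' : (b :: t).getLast? = some y := by rwa [List.getLast?_cons_cons] at hl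
      have hmem : (b :: t) ∈ @CovChains SecP (secOrder E) b y := by
        rw [mem_covChains_iff]
        exact ⟨hc.2, rfl, hl'⟩
      refine ⟨b, ⟨hc.1, (covChains_shape hmem).1⟩, b :: t, hmem, rfl⟩
  · rintro ⟨w, ⟨hw, _⟩, m, hm, rfl⟩
    rw [mem_covChains_iff] at hm
    obtain ⟨hc, hh, hl⟩ := hm
    refine ⟨?_, rfl, ?_⟩
    · refine List.isChain_cons.mpr ?_
      refine ⟨fun z hz => ?_, hc⟩
      rw [hh] at hz
      have : w = z := by simpa using hz
      rw [← this]
      exact hw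
    · match m, hh with
      | (m0 :: mt), _ => rw [List.getLast?_cons_cons]; exact hl

end AuxSec3
section AuxSec4

variable {E : ℕ → Fin 4 → Fin 4 → Prop}

/-- The atom set of the interval `[x,y]`, in raw form. -/
def ASet (E : ℕ → Fin 4 → Fin 4 → Prop) (x y : SecP) : Set SecP :=
  {w : SecP | SecStep E x w ∧ Relation.ReflTransGen (SecStep E) w y}

lemma ASet_one {x y : SecP} (hxy : Relation.ReflTransGen (SecStep E) x y)
    (h : y.1.1 = x.1.1 + 1) : ASet E x y = {y} := by
  ext w
  simp only [ASet, Set.mem_setOf_eq, Set.mem_singleton_iff]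
  constructor
  · rintro ⟨hw, hwy⟩
    exact rtg_lev_eq hwy (by have := hw.1; omega)
  · rintro rfl
    exact ⟨rtg_one hxy h, Relation.ReflTransGen.refl⟩

lemma ASet_two (hE0 : ∀ z : Fin 4, z.val < sz 1 → E 0 0 z)
    (hE1a : ∀ w : Fin 4, ∃! z : Fin 4, z.val < sz 1 ∧ E 1 z w)
    (hE1b : ∀ z : Fin 4, z.val < sz 1 → {w : Fin 4 | E 1 z w}.ncard = 2)
    (hreg : ∀ i : ℕ, 1 ≤ i → ∀ a : Fin 4,
      {t : Fin 4 | E (i + 1) a t}.ncard = 2 ∧ {s : Fin 4 | E (i + 1) s a}.ncard = 2)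
    (hgood : ∀ i : ℕ, 1 ≤ i → ∀ z y : Fin 4, z.val < sz i →
      {x : Fin 4 | E i z x} ≠ {x : Fin 4 | E (i + 1) x y} ∧
      {x : Fin 4 | E i z x} ≠ {x : Fin 4 | E (i + 1) x y}ᶜ)
    {x y : SecP} (h : y.1.1 = x.1.1 + 2) :
    ∃ w0, ASet E x y = {w0} := by
  obtain ⟨w0, ⟨h1, h2⟩, hu⟩ := sec_mid hE0 hE1a hE1b hreg hgood x y h
  refine ⟨w0, ?_⟩
  ext w
  simp only [ASet, Set.mem_setOf_eq, Set.mem_singleton_iff]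
  constructor
  · rintro ⟨hw, hwy⟩
    exact hu w ⟨hw, rtg_one hwy (by have := hw.1; omega)⟩
  · rintro rfl
    exact ⟨h1, Relation.ReflTransGen.single h2⟩

lemma ASet_big (hE0 : ∀ z : Fin 4, z.val < sz 1 → E 0 0 z)
    (hE1a : ∀ w : Fin 4, ∃! z : Fin 4, z.val < sz 1 ∧ E 1 z w)
    (hE1b : ∀ z : Fin 4, z.val < sz 1 → {w : Fin 4 | E 1 z w}.ncard = 2)
    (hreg : ∀ i : ℕ, 1 ≤ i → ∀ a : Fin 4,
      {t : Fin 4 | E (i + 1) a t}.ncard = 2 ∧ {s : Fin 4 | E (i + 1) s a}.ncard = 2)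
    (hgood : ∀ i : ℕ, 1 ≤ i → ∀ z y : Fin 4, z.val < sz i →
      {x : Fin 4 | E i z x} ≠ {x : Fin 4 | E (i + 1) x y} ∧
      {x : Fin 4 | E i z x} ≠ {x : Fin 4 | E (i + 1) x y}ᶜ)
    {x y : SecP} (h : x.1.1 + 3 ≤ y.1.1) :
    ASet E x y = {w : SecP | SecStep E x w} := by
  ext w
  simp only [ASet, Set.mem_setOf_eq]
  constructor
  · rintro ⟨hw, _⟩; exact hw
  · intro hw
    refine ⟨hw, sec_up hE0 hE1a hE1b hreg hgood w y (by have := hw.1; omega)⟩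

def Fc : ℕ → ℕ := fun n => if n ≤ 2 then 1 else 2^(n-2)

lemma Fc_succ (m : ℕ) : Fc (m+3) = Fc (m+2) + Fc (m+2) := by
  match m with
  | 0 => norm_num [Fc]
  | (k+1) =>
    simp only [Fc, if_neg (show ¬(k+1+3 ≤ 2) by omega), if_neg (show ¬(k+1+2 ≤ 2) by omega)]
    rw [show k+1+3-2 = (k+1+2-2)+1 from by omega, pow_succ]
    omega

lemma count_chains (hE0 : ∀ z : Fin 4, z.val < sz 1 → E 0 0 z)
    (hE1a : ∀ w : Fin 4, ∃! z : Fin 4, z.val < sz 1 ∧ E 1 z w)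
    (hE1b : ∀ z : Fin 4, z.val < sz 1 → {w : Fin 4 | E 1 z w}.ncard = 2)
    (hreg : ∀ i : ℕ, 1 ≤ i → ∀ a : Fin 4,
      {t : Fin 4 | E (i + 1) a t}.ncard = 2 ∧ {s : Fin 4 | E (i + 1) s a}.ncard = 2)
    (hgood : ∀ i : ℕ, 1 ≤ i → ∀ z y : Fin 4, z.val < sz i →
      {x : Fin 4 | E i z x} ≠ {x : Fin 4 | E (i + 1) x y} ∧
      {x : Fin 4 | E i z x} ≠ {x : Fin 4 | E (i + 1) x y}ᶜ) :
    ∀ (n : ℕ) (x y : SecP), Relation.ReflTransGen (SecStep E) x y →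
      y.1.1 = x.1.1 + n →
      (@CovChains SecP (secOrder E) x y).Finite ∧
      (@CovChains SecP (secOrder E) x y).ncard = Fc n := by
  intro n
  induction n using Nat.strong_induction_on with
  | _ n ih =>
  intro x y hxy hlev
  match n with
  | 0 =>
    have hx : x = y := rtg_lev_eq hxy (by omega)
    subst hx
    rw [covChains_self]
    exact ⟨Set.finite_singleton _, Set.ncard_singleton _⟩
  | 1 =>
    have hdec := covChains_decomp (E := E) x y (by omega)
    have hA : ASet E x y = {y} := ASet_one hxy hlev
    rw [show {w : SecP | SecStep E x w ∧ Relation.ReflTransGen (SecStep E) w y} = ASet E x y from rfl, hA] at hdec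
    rw [Set.biUnion_singleton] at hdec
    rw [hdec, covChains_self, Set.image_singleton]
    exact ⟨Set.finite_singleton _, Set.ncard_singleton _⟩
  | 2 =>
    have hdec := covChains_decomp (E := E) x y (by omega)
    obtain ⟨w0, hA⟩ := ASet_two hE0 hE1a hE1b hreg hgood hlev
    rw [show {w : SecP | SecStep E x w ∧ Relation.ReflTransGen (SecStep E) w y} = ASet E x y from rfl, hA] at hdec
    rw [Set.biUnion_singleton] at hdec
    have hw0 : w0 ∈ ASet E x y := by rw [hA]; rfl
    obtain ⟨hw1, hw2⟩ := hw0
    obtain ⟨hf, hc⟩ := ih 1 (by omega) w0 y hw2 (by have := hw1.1; omega)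
    rw [hdec]
    refine ⟨hf.image _, ?_⟩
    rw [Set.ncard_image_of_injective _ (List.cons_injective), hc]
    norm_num [Fc]
  | (m+3) =>
    have hdec := covChains_decomp (E := E) x y (by omega)
    have hA : ASet E x y = {w : SecP | SecStep E x w} :=
      ASet_big hE0 hE1a hE1b hreg hgood (by omega)
    have hcard : ({w : SecP | SecStep E x w}).ncard = 2 := covers_ncard hE0 hE1b hreg x
    obtain ⟨w1, w2, hne, hpair⟩ := Set.ncard_eq_two.mp hcard
    rw [show {w : SecP | SecStep E x w ∧ Relation.ReflTransGen (SecStep E) w y} = ASet E x y from rfl, hA, hpair] at hdec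
    rw [Set.biUnion_pair] at hdec
    have hw1 : w1 ∈ ASet E x y := by
      rw [hA, hpair]; exact Set.mem_insert _ _
    have hw2 : w2 ∈ ASet E x y := by
      rw [hA, hpair]; exact Set.mem_insert_iff.mpr (Or.inr rfl)
    obtain ⟨hf1, hc1⟩ := ih (m+2) (by omega) w1 y hw1.2 (by have := hw1.1.1; omega)
    obtain ⟨hf2, hc2⟩ := ih (m+2) (by omega) w2 y hw2.2 (by have := hw2.1.1; omega)
    rw [hdec]
    have hdisj : Disjoint (List.cons x '' @CovChains SecP (secOrder E) w1 y)
        (List.cons x '' @CovChains SecP (secOrder E) w2 y) := by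
      rw [Set.disjoint_left]
      rintro l ⟨m1, hm1, rfl⟩ ⟨m2, hm2, heq⟩
      have : m2 = m1 := List.cons_injective heq
      subst this
      rw [mem_covChains_iff] at hm1 hm2
      have e1 := hm1.2.1
      have e2 := hm2.2.1
      rw [e1] at e2
      exact hne (Option.some_injective _ e2)
    refine ⟨(hf1.image _).union (hf2.image _), ?_⟩
    rw [Set.ncard_union_eq hdisj (hf1.image _) (hf2.image _),
      Set.ncard_image_of_injective _ (List.cons_injective),
      Set.ncard_image_of_injective _ (List.cons_injective), hc1, hc2, Fc_succ]

end AuxSec4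
section AuxSec5

variable {E : ℕ → Fin 4 → Fin 4 → Prop}

lemma atomSet_eq (x y : SecP) :
    {z : SecP | @CovBy SecP (@Preorder.toLT SecP (@PartialOrder.toPreorder SecP (secOrder E))) x z ∧
        @LE.le SecP (@Preorder.toLE SecP (@PartialOrder.toPreorder SecP (secOrder E))) z y}
      = ASet E x y := by
  ext z
  exact and_congr sec_covby_iff Iff.rfl

lemma bin_up (hE0 : ∀ z : Fin 4, z.val < sz 1 → E 0 0 z)
    (hE1a : ∀ w : Fin 4, ∃! z : Fin 4, z.val < sz 1 ∧ E 1 z w)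
    (hE1b : ∀ z : Fin 4, z.val < sz 1 → {w : Fin 4 | E 1 z w}.ncard = 2)
    (hreg : ∀ i : ℕ, 1 ≤ i → ∀ a : Fin 4,
      {t : Fin 4 | E (i + 1) a t}.ncard = 2 ∧ {s : Fin 4 | E (i + 1) s a}.ncard = 2)
    (hbin : @IsBinomialPoset SecP (secOrder E) secBot A112) :
    ∀ (k : ℕ) (p y : SecP), p.1.1 = k → k + 2 ≤ y.1.1 →
      Relation.ReflTransGen (SecStep E) p y := by
  intro k
  induction k with
  | zero =>
    intro p y hp _
    have hp0 : p = secBot := by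
      refine secext hp ?_
      have h2 := p.2
      rw [hp] at h2
      simpa [sz, secBot] using h2
    rw [hp0]
    exact @IsBinomialPoset.bot_le SecP (secOrder E) secBot A112 hbin y
  | succ k ihk =>
    intro p y hp hy
    obtain ⟨q, hq⟩ := parent hE0 hE1a hreg p (by omega)
    have hqk : q.1.1 = k := by have := hq.1; omega
    have hqy := ihk q y hqk (by omega)
    obtain ⟨l, hl, hlen⟩ := chain_ex hqy
    have hat := @IsBinomialPoset.atoms SecP (secOrder E) secBot A112 hbin q y (y.1.1 - k) (by omega) ⟨l, hl, by omega⟩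
    rw [atomSet_eq] at hat
    have hA112 : A112 (y.1.1 - k) = 2 := by
      unfold A112
      rw [if_neg (by omega)]
    have hsub : ASet E q y ⊆ {w : SecP | SecStep E q w} := fun w hw => hw.1
    have heq : ASet E q y = {w : SecP | SecStep E q w} := by
      apply Set.eq_of_subset_of_ncard_le hsub ?_ (covers_finite q)
      rw [covers_ncard hE0 hE1b hreg q, hat, hA112]
    have : p ∈ ASet E q y := by rw [heq]; exact hq
    exact this.2

end AuxSec5
/-- given a choice of `C₈` or `C₄ ∪ C₄` covering structures between the
levels `X_{i+1}` and `X_{i+2}` for all `i ≥ 1` (i.e. 2-regular bipartite covering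
structures), together with the standard structure on `X_{0,2}`, the generated order is a
confluent binomial poset with atomic sequence `(1,1,2,2,2,...)` if and only if no `2+2`
partition of some `X_{i+1}` is simultaneously an induced cover partition (from an element
of `X_{i+2}`) and an induced co-cover partition (from an element of `X_i`). -/
theorem secOrder_binomial_iff_no_common_partition
    (E : ℕ → Fin 4 → Fin 4 → Prop)
    -- the bottom is covered by both elements of `X_1`:
    (hE0 : ∀ z : Fin 4, z.val < sz 1 → E 0 0 z)
    -- standard structure on `X_{0,2}` : each element of `X_2` covers exactly one
    -- element of `X_1`, and each element of `X_1` is covered by exactly two: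
    (hE1a : ∀ w : Fin 4, ∃! z : Fin 4, z.val < sz 1 ∧ E 1 z w)
    (hE1b : ∀ z : Fin 4, z.val < sz 1 → {w : Fin 4 | E 1 z w}.ncard = 2)
    -- the covering structure between `X_{i+1}` and `X_{i+2}` (`i ≥ 1`) is bipartite
    -- 2-regular (i.e. is a `C₈` or a `C₄ ∪ C₄` structure):
    (hreg : ∀ i : ℕ, 1 ≤ i → ∀ a : Fin 4,
      {t : Fin 4 | E (i + 1) a t}.ncard = 2 ∧ {s : Fin 4 | E (i + 1) s a}.ncard = 2) :
    (@IsBinomialPoset SecP (secOrder E) secBot A112 ∧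
        @StronglyConfluent SecP (secOrder E).toPreorder) ↔
      ¬ ∃ i : ℕ, 1 ≤ i ∧ ∃ z y : Fin 4, z.val < sz i ∧
        ({x : Fin 4 | E i z x} = {x : Fin 4 | E (i + 1) x y} ∨
          {x : Fin 4 | E i z x} = {x : Fin 4 | E (i + 1) x y}ᶜ) := by
  
  constructor
  · -- binomial (and confluent) implies no common partition
    rintro ⟨hbin, -⟩ ⟨i, hi, z, y, hz, hcase⟩
    have hYv : (y : Fin 4).val < sz (i+2) := by rw [sz_eq_four (by omega)]; exact y.isLt
    rcases hcase with hcase | hcase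
    · -- equality case : a 2-interval with two atoms
      have hS : {t : Fin 4 | E i z t}.ncard = 2 := by
        match i, hi, hz with
        | 1, _, hz => exact hE1b z hz
        | (k+2), _, _ => exact (hreg (k+1) (by omega) z).1
      obtain ⟨t, ht⟩ := Set.nonempty_of_ncard_ne_zero
        (s := {t : Fin 4 | E i z t}) (by rw [hS]; omega)
      have htv : (t : Fin 4).val < sz (i+1) := by rw [sz_eq_four (by omega)]; exact t.isLt
      have h1 : SecStep E ⟨(i, z), hz⟩ ⟨(i+1, t), htv⟩ := ⟨rfl, ht⟩
      have h2 : SecStep E ⟨(i+1, t), htv⟩ ⟨(i+2, y), hYv⟩ := by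
        refine ⟨rfl, ?_⟩
        have : t ∈ {x : Fin 4 | E (i+1) x y} := by rw [← hcase]; exact ht
        exact this
      have hmem : [⟨(i, z), hz⟩, ⟨(i+1, t), htv⟩, ⟨(i+2, y), hYv⟩] ∈
          @CovChains SecP (secOrder E) ⟨(i, z), hz⟩ ⟨(i+2, y), hYv⟩ := by
        refine mem_covChains_iff.mpr ?_
        refine ⟨?_, rfl, rfl⟩
        exact List.IsChain.cons_cons h1 (List.IsChain.cons_cons h2 (List.IsChain.singleton _))
      have hat := @IsBinomialPoset.atoms SecP (secOrder E) secBot A112 hbin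
        ⟨(i, z), hz⟩ ⟨(i+2, y), hYv⟩ 2 (by norm_num) ⟨_, hmem, rfl⟩
      replace hat := (congrArg Set.ncard (atomSet_eq (E := E) ⟨(i, z), hz⟩ ⟨(i+2, y), hYv⟩)).symm.trans hat
      have hAeq : ASet E ⟨(i, z), hz⟩ ⟨(i+2, y), hYv⟩ =
          {w : SecP | SecStep E ⟨(i, z), hz⟩ w} := by
        ext v
        constructor
        · rintro ⟨hv, -⟩; exact hv
        · intro hv
          refine ⟨hv, Relation.ReflTransGen.single ⟨?_, ?_⟩⟩
          · have hv1 : v.1.1 = i + 1 := hv.1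
            show i + 2 = v.1.1 + 1
            omega
          · have hv1 : v.1.1 = i + 1 := hv.1
            have hv2 : E i z v.1.2 := hv.2
            have hmem2 : v.1.2 ∈ {x : Fin 4 | E (i+1) x y} := by rw [← hcase]; exact hv2
            show E v.1.1 v.1.2 y
            rw [hv1]
            exact hmem2
      rw [hAeq] at hat
      replace hat := (covers_ncard hE0 hE1b hreg _).symm.trans hat
      norm_num [A112] at hat
    · -- complement case : `y` should be above `z` but cannot be
      have hZY := bin_up hE0 hE1a hE1b hreg hbin i ⟨(i, z), hz⟩ ⟨(i+2, y), hYv⟩ rfl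
        (show i + 2 ≤ i + 2 by omega)
      obtain ⟨l, hl, hlen⟩ := chain_ex hZY
      have hlen3 : l.length = 3 := by
        have h' : l.length + i = (i + 2) + 1 := hlen
        omega
      replace hl := mem_covChains_iff.mp hl
      obtain ⟨hc, hh, hgl⟩ := hl
      match l, hc, hh, hgl, hlen3 with
      | [a, b, c], hc, hh, hgl, _ =>
        have ha : a = ⟨(i, z), hz⟩ := Option.some.inj hh
        have hcY : c = ⟨(i+2, y), hYv⟩ := Option.some.inj hgl
        subst ha
        subst hcY
        have h1 : SecStep E ⟨(i, z), hz⟩ b := (List.isChain_cons_cons.mp hc).1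
        have h2 : SecStep E b ⟨(i+2, y), hYv⟩ :=
          (List.isChain_cons_cons.mp (List.isChain_cons_cons.mp hc).2).1
        have hb1 : b.1.1 = i + 1 := h1.1
        have e1 : E i z b.1.2 := h1.2
        have e2 : E b.1.1 b.1.2 y := h2.2
        rw [hb1] at e2
        have hmem1 : b.1.2 ∈ {x : Fin 4 | E i z x} := e1
        rw [hcase] at hmem1
        exact hmem1 e2
  · -- no common partition implies binomial and confluent
    intro hbad
    have hgood : ∀ i : ℕ, 1 ≤ i → ∀ z y : Fin 4, z.val < sz i →
        {x : Fin 4 | E i z x} ≠ {x : Fin 4 | E (i + 1) x y} ∧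
        {x : Fin 4 | E i z x} ≠ {x : Fin 4 | E (i + 1) x y}ᶜ := by
      intro i hi z y hz
      constructor
      · intro h; exact hbad ⟨i, hi, z, y, hz, Or.inl h⟩
      · intro h; exact hbad ⟨i, hi, z, y, hz, Or.inr h⟩
    have hbotle : ∀ p : SecP, Relation.ReflTransGen (SecStep E) secBot p := by
      intro p
      rcases p with ⟨⟨k, a⟩, hpa⟩
      match k, hpa with
      | 0, hpa =>
        have ha0 : a = 0 := Fin.ext (by simpa [sz] using hpa)
        subst ha0
        exact Relation.ReflTransGen.refl
      | 1, hpa => exact Relation.ReflTransGen.single ⟨rfl, hE0 a hpa⟩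
      | (k+2), hpa =>
        exact sec_up hE0 hE1a hE1b hreg hgood secBot _ (show 0 + 2 ≤ k + 2 by omega)
    refine ⟨@IsBinomialPoset.mk SecP (secOrder E) secBot A112 ?_ ?_ ?_ ?_ ?_ ?_ ?_ ?_, ?_⟩
    · -- bot_le
      exact fun p => hbotle p
    · -- directed
      intro x y
      refine ⟨⟨(max x.1.1 y.1.1 + 2, 0), by rw [sz_eq_four (by omega)]; norm_num⟩, ?_, ?_⟩
      · exact sec_up hE0 hE1a hE1b hreg hgood _ _
          (show x.1.1 + 2 ≤ max x.1.1 y.1.1 + 2 by omega)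
      · exact sec_up hE0 hE1a hE1b hreg hgood _ _
          (show y.1.1 + 2 ≤ max x.1.1 y.1.1 + 2 by omega)
    · -- locFin
      intro x y
      apply Set.Finite.subset (levels_finite y.1.1)
      intro p hp
      exact rtg_lev hp.2
    · -- chain_nonempty
      intro x y h
      obtain ⟨l, hl, -⟩ := chain_ex (show Relation.ReflTransGen (SecStep E) x y from h)
      exact ⟨l, hl⟩
    · -- graded
      intro x y l hl l' hl'
      have s1 := (covChains_shape hl).2
      have s2 := (covChains_shape hl').2
      omega
    · -- allLengths
      intro n
      refine ⟨⟨(n, 0), by have := sz_pos n; simpa using this⟩, ?_⟩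
      obtain ⟨l, hl, hlen⟩ := chain_ex (hbotle ⟨(n, 0), by have := sz_pos n; simpa using this⟩)
      refine ⟨l, hl, ?_⟩
      have h' : l.length + 0 = n + 1 := hlen
      omega
    · -- count
      intro x y x' y' n h h'
      obtain ⟨l, hl, hlen⟩ := h
      obtain ⟨l', hl', hlen'⟩ := h'
      obtain ⟨hr, hs⟩ := covChains_shape hl
      obtain ⟨hr', hs'⟩ := covChains_shape hl'
      rw [(count_chains hE0 hE1a hE1b hreg hgood n x y hr (by omega)).2,
        (count_chains hE0 hE1a hE1b hreg hgood n x' y' hr' (by omega)).2]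
    · -- atoms
      intro x y n hn h
      obtain ⟨l, hl, hlen⟩ := h
      obtain ⟨hr, hs⟩ := covChains_shape hl
      have hlev : y.1.1 = x.1.1 + n := by omega
      rw [atomSet_eq]
      match n, hn, hlev with
      | 1, _, hlev =>
        rw [ASet_one hr hlev]
        simp [A112]
      | 2, _, hlev =>
        obtain ⟨w0, hw0⟩ := ASet_two hE0 hE1a hE1b hreg hgood hlev
        rw [hw0]
        simp [A112]
      | (m+3), _, hlev =>
        rw [ASet_big hE0 hE1a hE1b hreg hgood (by omega), covers_ncard hE0 hE1b hreg]
        show 2 = A112 (m+3)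
        unfold A112
        rw [if_neg (by omega)]
    · -- strongly confluent
      show @StronglyConfluent SecP (secOrder E).toPreorder
      refine ⟨fun n => ⟨(2*n, 0), by have := sz_pos (2*n); simpa using this⟩, ?_, ?_⟩
      · apply @strictMono_nat_of_lt_succ _ ((secOrder E).toPreorder)
        intro n
        apply @lt_of_le_of_ne SecP (secOrder E)
        · exact sec_up hE0 hE1a hE1b hreg hgood _ _ (show 2*n + 2 ≤ 2*(n+1) by omega)
        · intro h
          have h' : (2*n : ℕ) = 2*(n+1) := congrArg (fun p : SecP => p.1.1) h
          omega
      · intro p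
        exact ⟨p.1.1 + 1, sec_up hE0 hE1a hE1b hreg hgood _ _
          (show p.1.1 + 2 ≤ 2*(p.1.1+1) by omega)⟩
end

section
/- An infinite sequence of positive integers A = (a_1, a_2, ...) is realisable as the atomic sequence of some (infinite downward bounded directed locally finite) binomial poset if and only if it is realised by a strongly confluent such binomial poset. -/
open Relation Filter Topology

section Aux
variable {P : Type*} [PartialOrder P]

lemma covChains_ne_nil {x y : P} {l : List P} (h : l ∈ CovChains x y) : l ≠ [] := by
  rintro rfl; simp [CovChains] at h

lemma singleton_mem_covChains (x : P) : [x] ∈ CovChains x x :=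
  ⟨List.isChain_singleton x, by simp, by simp⟩

lemma covChains_eq_of_length_one {x y : P} {l : List P} (h : l ∈ CovChains x y)
    (hl : l.length = 1) : x = y := by
  obtain ⟨a, rfl⟩ : ∃ a, l = [a] := by
    rcases l with _ | ⟨a, _ | _⟩ <;> simp_all
  obtain ⟨-, hh, hg⟩ := h
  simp at hh hg
  exact hh.symm.trans hg

lemma covChains_between {x y : P} {l : List P} (h : l ∈ CovChains x y) :
    ∀ a ∈ l, x ≤ a ∧ a ≤ y := by
  obtain ⟨hc, hh, hg⟩ := h
  have hne : l ≠ [] := by rintro rfl; simp at hh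
  have hpw : l.Pairwise (· < ·) := by
    rw [← List.isChain_iff_pairwise]
    exact hc.imp fun a b h => h.lt
  intro a ha
  constructor
  · have hx : l.head hne = x := by
      have : l.head? = some (l.head hne) := List.head?_eq_head hne
      rw [hh] at this; exact (Option.some_injective _ this).symm
    have hct := List.cons_head_tail hne
    rw [← hct] at hpw ha
    rcases List.mem_cons.1 ha with rfl | ha'
    · exact le_of_eq hx.symm
    · exact le_of_lt (hx ▸ (List.pairwise_cons.1 hpw).1 a ha')
  · have hy : l.getLast hne = y := by
      have : l.getLast? = some (l.getLast hne) := List.getLast?_eq_getLast hne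
      rw [hg] at this; exact (Option.some_injective _ this).symm
    have hdg := List.dropLast_append_getLast hne
    rw [← hdg] at hpw ha
    rcases List.mem_append.1 ha with ha' | ha'
    · have := (List.pairwise_append.1 hpw).2.2 a ha' (l.getLast hne) (by simp)
      exact le_of_lt (hy ▸ this)
    · simp at ha'; subst ha'; exact le_of_eq hy

lemma covChains_append {x y z : P} {l m : List P}
    (hl : l ∈ CovChains x y) (hm : m ∈ CovChains y z) :
    (l ++ m.tail) ∈ CovChains x z ∧ (l ++ m.tail).length + 1 = l.length + m.length := by
  obtain ⟨hc, hh, hg⟩ := hl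
  obtain ⟨hc', hh', hg'⟩ := hm
  have hmne : m ≠ [] := by rintro rfl; simp at hh'
  have hlne : l ≠ [] := by rintro rfl; simp at hh
  have hm_eq : m = y :: m.tail := by
    have : m.head? = some (m.head hmne) := List.head?_eq_head hmne
    rw [hh'] at this
    conv_lhs => rw [← List.cons_head_tail hmne]
    rw [← Option.some_injective _ this]
  have hlen : m.length = m.tail.length + 1 := by
    have h1 := List.length_pos_iff.2 hmne
    have h2 := List.length_tail (l := m)
    omega
  refine ⟨⟨?_, ?_, ?_⟩, by simp only [List.length_append]; omega⟩
  · unfold List.Chain' at hc hc' ⊢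
    rw [List.isChain_append]
    refine ⟨hc, (hm_eq ▸ hc' : (y :: m.tail).IsChain _).tail, ?_⟩
    intro a ha c hc2
    rw [hg] at ha
    have hyc : (y :: m.tail).IsChain (· ⋖ ·) := hm_eq ▸ hc'
    rw [List.isChain_cons] at hyc
    simp only [Option.mem_def, Option.some.injEq] at ha
    subst ha
    exact hyc.1 c hc2
  · rw [List.head?_append_of_ne_nil _ hlne]; exact hh
  · rcases eq_or_ne m.tail [] with htl | htl
    · have hyz : y = z := by
        rw [hm_eq, htl] at hg'; simpa using hg'
      rw [htl]; simpa [hyz] using hg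
    · rw [List.getLast?_append_of_ne_nil _ htl, List.getLast?_tail]
      have h2 : m.length ≠ 1 := by
        have := List.length_pos_iff.2 htl; omega
      rw [if_neg h2]; exact hg'

lemma covChains_take {x y : P} {l : List P} (h : l ∈ CovChains x y) (n : ℕ)
    (hn : n < l.length) :
    l.take (n + 1) ∈ CovChains x (l.get ⟨n, hn⟩) ∧ (l.take (n + 1)).length = n + 1 := by
  obtain ⟨hc, hh, hg⟩ := h
  have hlen : (l.take (n + 1)).length = n + 1 := by
    rw [List.length_take]; omega
  refine ⟨⟨hc.take _, ?_, ?_⟩, hlen⟩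
  · rw [List.head?_take, if_neg (Nat.succ_ne_zero n)]; exact hh
  · rw [List.getLast?_eq_getElem?, hlen]
    simp only [Nat.add_sub_cancel, List.getElem?_take, Nat.lt_succ_self, if_true]
    rw [List.getElem?_eq_getElem hn]
    rfl

end Aux

section Aux2
variable {P : Type*} [PartialOrder P] {b : P}

lemma hasRankFrom_exists (hc : ∀ x y : P, x ≤ y → (CovChains x y).Nonempty)
    (hb : ∀ x : P, b ≤ x) (p : P) : ∃ n, HasRankFrom b p n := by
  obtain ⟨l, hl⟩ := hc b p (hb p)
  have hne : l ≠ [] := covChains_ne_nil hl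
  have : l.length ≠ 0 := by simpa using hne
  exact ⟨l.length - 1, l, hl, by omega⟩

lemma hasRankFrom_unique
    (hgr : ∀ x y : P, ∀ l ∈ CovChains x y, ∀ l' ∈ CovChains x y, l.length = l'.length)
    {p : P} {n m : ℕ} (h : HasRankFrom b p n) (h' : HasRankFrom b p m) : n = m := by
  obtain ⟨l, hl, hln⟩ := h
  obtain ⟨l', hl', hln'⟩ := h'
  have := hgr b p l hl l' hl'
  omega

lemma hasRankFrom_le_of_le (hc : ∀ x y : P, x ≤ y → (CovChains x y).Nonempty)
    {u v : P} {n m : ℕ} (huv : u ≤ v)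
    (hu : HasRankFrom b u n) (hv : HasRankFrom b v m)
    (hgr : ∀ x y : P, ∀ l ∈ CovChains x y, ∀ l' ∈ CovChains x y, l.length = l'.length) :
    n ≤ m ∧ (u < v → n < m) := by
  obtain ⟨l, hl, hln⟩ := hu
  obtain ⟨q, hq⟩ := hc u v huv
  obtain ⟨happ, hlen⟩ := covChains_append hl hq
  have hqne : q ≠ [] := covChains_ne_nil hq
  have hq1 : 1 ≤ q.length := List.length_pos_iff.2 hqne
  have hm : (l ++ q.tail).length = m + 1 := by
    obtain ⟨l', hl', hln'⟩ := hv
    have := hgr b v _ happ _ hl'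
    omega
  constructor
  · omega
  · intro hlt
    have : q.length ≠ 1 := by
      intro h1
      exact absurd (covChains_eq_of_length_one hq h1) (ne_of_lt hlt)
    omega

lemma hasRankFrom_succ_exists
    (hB : ∀ n : ℕ, ∃ x : P, HasRankFrom b x n)
    (hd : ∀ x y : P, ∃ z : P, x ≤ z ∧ y ≤ z)
    (hc : ∀ x y : P, x ≤ y → (CovChains x y).Nonempty)
    (hb : ∀ x : P, b ≤ x)
    (hgr : ∀ x y : P, ∀ l ∈ CovChains x y, ∀ l' ∈ CovChains x y, l.length = l'.length)
    {p : P} {n : ℕ} (hp : HasRankFrom b p n) :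
    ∃ q : P, p < q ∧ ∃ m, n < m ∧ HasRankFrom b q m := by
  obtain ⟨w, hw⟩ := hB (n + 1)
  obtain ⟨z, hpz, hwz⟩ := hd p w
  obtain ⟨m, hm⟩ := hasRankFrom_exists hc hb z
  have h1 : n + 1 ≤ m := (hasRankFrom_le_of_le hc hwz hw hm hgr).1
  refine ⟨z, lt_of_le_of_ne hpz ?_, m, by omega, hm⟩
  rintro rfl
  exact absurd (hasRankFrom_unique hgr hp hm) (by omega)

end Aux2

section Aux3
variable {P : Type*} [PartialOrder P] {b : P}

lemma hasRankFrom_prefix {y : P} {m : ℕ} (hy : HasRankFrom b y m) (n : ℕ) (hn : n ≤ m) :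
    ∃ u : P, u ≤ y ∧ HasRankFrom b u n := by
  obtain ⟨l, hl, hlen⟩ := hy
  have hn' : n < l.length := by omega
  obtain ⟨ht, htlen⟩ := covChains_take hl n hn'
  exact ⟨l.get ⟨n, hn'⟩, (covChains_between hl _ (l.get_mem _)).2, _, ht, htlen⟩

variable {S : Set P} (hS : ∀ ⦃p q : P⦄, p ∈ S → q ≤ p → q ∈ S)
include hS

lemma covBy_subtype {u v : S} : u ⋖ v ↔ (u : P) ⋖ (v : P) := by
  constructor
  · rintro ⟨hlt, hmid⟩
    refine ⟨hlt, fun c hc1 hc2 => ?_⟩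
    have hcS : c ∈ S := hS v.2 hc2.le
    exact hmid (show u < ⟨c, hcS⟩ from Subtype.coe_lt_coe.1 hc1)
      (show (⟨c, hcS⟩ : S) < v from Subtype.coe_lt_coe.1 hc2)
  · rintro ⟨hlt, hmid⟩
    exact ⟨Subtype.coe_lt_coe.1 hlt, fun c hc1 hc2 =>
      hmid (Subtype.coe_lt_coe.2 hc1) (Subtype.coe_lt_coe.2 hc2)⟩

lemma covChains_map_mem {u v : S} {l : List S} :
    l ∈ CovChains u v ↔ l.map Subtype.val ∈ CovChains (u : P) (v : P) := by
  unfold CovChains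
  simp only [Set.mem_setOf_eq, List.Chain', List.isChain_map, List.head?_map, List.getLast?_map]
  constructor
  · rintro ⟨hc, hh, hg⟩
    exact ⟨hc.imp fun a c h => (covBy_subtype hS).1 h, by rw [hh]; rfl, by rw [hg]; rfl⟩
  · rintro ⟨hc, hh, hg⟩
    refine ⟨hc.imp fun a c h => (covBy_subtype hS).2 h, ?_, ?_⟩
    · cases hl : l.head? with
      | none => rw [hl] at hh; simp at hh
      | some a => rw [hl] at hh; simp at hh; exact congrArg some (Subtype.ext hh)
    · cases hl : l.getLast? with
      | none => rw [hl] at hg; simp at hg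
      | some a => rw [hl] at hg; simp at hg; exact congrArg some (Subtype.ext hg)

lemma covChains_image {u v : S} :
    (List.map (Subtype.val : S → P)) '' CovChains u v = CovChains (u : P) (v : P) := by
  ext m
  constructor
  · rintro ⟨l, hl, rfl⟩
    exact (covChains_map_mem hS).1 hl
  · intro hm
    have hmem : ∀ a ∈ m, a ∈ S := fun a ha => hS v.2 (covChains_between hm a ha).2
    refine ⟨m.pmap (fun a h => (⟨a, h⟩ : S)) hmem, ?_, ?_⟩
    · rw [covChains_map_mem hS, List.map_pmap]
      simpa [List.pmap_eq_map] using hm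
    · rw [List.map_pmap]
      simp [List.pmap_eq_map]

lemma covChains_ncard (u v : S) :
    (CovChains u v).ncard = (CovChains (u : P) (v : P)).ncard := by
  rw [← covChains_image hS]
  exact (Set.ncard_image_of_injective _ (List.map_injective_iff.2 Subtype.val_injective)).symm

lemma covChains_exists_iff (u v : S) (n : ℕ) :
    (∃ l ∈ CovChains u v, l.length = n + 1) ↔
      (∃ l ∈ CovChains (u : P) (v : P), l.length = n + 1) := by
  constructor
  · rintro ⟨l, hl, hlen⟩
    exact ⟨l.map Subtype.val, (covChains_map_mem hS).1 hl, by simpa using hlen⟩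
  · rintro ⟨m, hm, hlen⟩
    obtain ⟨l, hl, rfl⟩ := (covChains_image hS).symm ▸ hm
    exact ⟨l, hl, by simpa using hlen⟩

lemma atoms_image (u v : S) :
    (Subtype.val : S → P) '' {z : S | u ⋖ z ∧ z ≤ v} = {z : P | (u : P) ⋖ z ∧ z ≤ (v : P)} := by
  ext z
  constructor
  · rintro ⟨w, ⟨hw1, hw2⟩, rfl⟩
    exact ⟨(covBy_subtype hS).1 hw1, hw2⟩
  · rintro ⟨hz1, hz2⟩
    have hzS : z ∈ S := hS v.2 hz2
    exact ⟨⟨z, hzS⟩, ⟨(covBy_subtype hS).2 hz1, hz2⟩, rfl⟩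

end Aux3

/-- an infinite sequence of positive integers is realisable as the atomic
sequence of some infinite downward bounded directed locally finite binomial poset iff it
is realised by a strongly confluent such binomial poset. -/
theorem realisable_iff_stronglyConfluent_realisable (A : ℕ → ℕ)
    (hpos : ∀ n : ℕ, 1 ≤ n → 0 < A n) :
    (∃ X : BinPoset, IsBinomialPoset X.carrier X.bot A ∧ Infinite X.carrier) ↔
    (∃ X : BinPoset, IsBinomialPoset X.carrier X.bot A ∧ Infinite X.carrier ∧
      StronglyConfluent X.carrier) := by
  constructor
  · rintro ⟨X, hB, hInf⟩
    obtain ⟨P, b⟩ := X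
    dsimp at hB ⊢
    have hc := hB.chain_nonempty
    have hgr := hB.graded
    have hbl := hB.bot_le
    -- every element has a strict upper bound
    have hsucc : ∀ p : P, ∃ q, p < q := by
      intro p
      obtain ⟨n, hn⟩ := hasRankFrom_exists hc hbl p
      obtain ⟨q, hq, -⟩ := hasRankFrom_succ_exists hB.allLengths hB.directed hc hbl hgr hn
      exact ⟨q, hq⟩
    choose f hf using hsucc
    set x : ℕ → P := fun i => f^[i] b with hx
    have hxsucc : ∀ i, x (i + 1) = f (x i) := fun i => Function.iterate_succ_apply' f i b
    have hxmono : StrictMono x := strictMono_nat_of_lt_succ fun i => by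
      rw [hxsucc]; exact hf _
    have hrank : ∀ i, ∃ m, i ≤ m ∧ HasRankFrom b (x i) m := by
      intro i
      induction i with
      | zero => exact ⟨0, le_refl 0, [b], singleton_mem_covChains b, rfl⟩
      | succ i ih =>
        obtain ⟨m, him, hm⟩ := ih
        obtain ⟨m', hm'⟩ := hasRankFrom_exists hc hbl (x (i + 1))
        have hlt : x i < x (i + 1) := hxmono (Nat.lt_succ_self i)
        have := (hasRankFrom_le_of_le hc hlt.le hm hm' hgr).2 hlt
        exact ⟨m', by omega, hm'⟩
    set S : Set P := {p | ∃ i, p ≤ x i} with hSdef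
    have hS : ∀ ⦃p q : P⦄, p ∈ S → q ≤ p → q ∈ S := by
      rintro p q ⟨i, hi⟩ hqp; exact ⟨i, hqp.trans hi⟩
    have hbS : b ∈ S := ⟨0, hbl _⟩
    -- ranks in the subtype correspond to ranks in P
    have hrank_iff : ∀ (u : S) (n : ℕ),
        HasRankFrom (⟨b, hbS⟩ : S) u n ↔ HasRankFrom b (u : P) n :=
      fun u n => covChains_exists_iff hS _ u n
    have hallS : ∀ n : ℕ, ∃ u : S, HasRankFrom (⟨b, hbS⟩ : S) u n := by
      intro n
      obtain ⟨m, hnm, hm⟩ := hrank n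
      obtain ⟨u, huy, hu⟩ := hasRankFrom_prefix hm n hnm
      exact ⟨⟨u, ⟨n, huy⟩⟩, (hrank_iff _ n).2 hu⟩
    have hBS : IsBinomialPoset S (⟨b, hbS⟩ : S) A := by
      constructor
      · exact fun u => Subtype.coe_le_coe.1 (hbl u)
      · rintro ⟨p, i, hpi⟩ ⟨q, j, hqj⟩
        refine ⟨⟨x (max i j), ⟨max i j, le_refl _⟩⟩, ?_, ?_⟩
        · exact Subtype.coe_le_coe.1 (hpi.trans (hxmono.monotone (le_max_left i j)))
        · exact Subtype.coe_le_coe.1 (hqj.trans (hxmono.monotone (le_max_right i j)))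
      · intro u v
        refine Set.Finite.subset ((hB.locFin (u : P) (v : P)).preimage
          (Subtype.val_injective.injOn)) ?_
        rintro w ⟨h1, h2⟩
        exact ⟨h1, h2⟩
      · intro u v huv
        obtain ⟨m, hm⟩ := hc (u : P) (v : P) huv
        obtain ⟨l, hl, -⟩ := (covChains_image hS (u := u) (v := v)).symm ▸ hm
        exact ⟨l, hl⟩
      · intro u v l hl l' hl'
        have := hgr (u : P) (v : P) _ ((covChains_map_mem hS).1 hl)
          _ ((covChains_map_mem hS).1 hl')
        simpa using this
      · exact hallS
      · intro u v u' v' n h1 h2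
        rw [covChains_ncard hS u v, covChains_ncard hS u' v']
        exact hB.count _ _ _ _ n ((covChains_exists_iff hS u v n).1 h1)
          ((covChains_exists_iff hS u' v' n).1 h2)
      · intro u v n hn h1
        rw [← hB.atoms (u : P) (v : P) n hn ((covChains_exists_iff hS u v n).1 h1)]
        rw [← atoms_image hS u v]
        exact (Set.ncard_image_of_injective _ Subtype.val_injective).symm
    refine ⟨⟨S, ⟨b, hbS⟩⟩, hBS, ?_, ?_⟩
    · choose g hg using hallS
      refine Infinite.of_injective g fun n m hnm => ?_
      exact hasRankFrom_unique hBS.graded (hnm ▸ hg n) (hg m)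
    · refine ⟨fun i => ⟨x i, ⟨i, le_refl _⟩⟩, fun i j hij => Subtype.coe_lt_coe.1 (hxmono hij), ?_⟩
      rintro ⟨p, i, hpi⟩
      exact ⟨i, Subtype.coe_le_coe.1 hpi⟩
  · rintro ⟨X, h1, h2, -⟩
    exact ⟨X, h1, h2⟩
end

section
/- If a finite sequence (a_1, ..., a_n) of positive integers with a_1 = 1 satisfies a_1 ≤ a_2 ≤ ... ≤ a_n and the divisibility condition that (∏_{l=j+1}^{j+i} a_l)/(∏_{l=1}^{i} a_l) is a nonnegative integer for all i,j ≥ 1 with i+j ≤ n, then it extends to an infinite sequence satisfying the same conditions for all i,j, with finite limit; in particular the extension a_{n+1} = a_{n+2} = ... = lcm(a_1,...,a_n) works. -/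
open Finset

/-- a finite sequence `(a 1, ..., a n)` of positive integers with `a 1 = 1`
which is weakly increasing and satisfies the generalized binomial divisibility condition
for all `i + j ≤ n` extends to an infinite sequence satisfying the same conditions for
all `i, j ≥ 1`, bounded (hence with finite limit); in particular the constant extension
by `lcm (a 1, ..., a n)` works. -/
theorem extend_finite_binomial_sequence (n : ℕ) (hn : 1 ≤ n) (a : ℕ → ℕ)
    (hpos : ∀ i : ℕ, 1 ≤ i → i ≤ n → 0 < a i) (h1 : a 1 = 1)
    (hmono : ∀ i : ℕ, 1 ≤ i → i + 1 ≤ n → a i ≤ a (i + 1))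
    (hdvd : ∀ i j : ℕ, 1 ≤ i → 1 ≤ j → i + j ≤ n →
      (∏ l ∈ Finset.Icc 1 i, a l) ∣ ∏ l ∈ Finset.Icc (j + 1) (j + i), a l) :
    ∃ b : ℕ → ℕ,
      (∀ i : ℕ, 1 ≤ i → i ≤ n → b i = a i) ∧
      (∀ i : ℕ, 1 ≤ i → 0 < b i) ∧ b 1 = 1 ∧
      (∀ i : ℕ, 1 ≤ i → b i ≤ b (i + 1)) ∧
      (∀ i j : ℕ, 1 ≤ i → 1 ≤ j →
        (∏ l ∈ Finset.Icc 1 i, b l) ∣ ∏ l ∈ Finset.Icc (j + 1) (j + i), b l) ∧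
      (∃ C : ℕ, ∀ i : ℕ, b i ≤ C) ∧
      (∀ i : ℕ, n < i → b i = (Finset.Icc 1 n).lcm a) := by
  set L := (Finset.Icc 1 n).lcm a with hL
  have hLpos : 0 < L := by
    apply Nat.pos_of_ne_zero
    rw [hL]
    intro h
    rw [Finset.lcm_eq_zero_iff] at h
    simp only [Set.mem_image, Finset.mem_coe, Finset.mem_Icc] at h
    obtain ⟨l, ⟨hl1, hl2⟩, h0⟩ := h
    have := hpos l hl1 hl2; omega
  set b : ℕ → ℕ := fun i => if 1 ≤ i ∧ i ≤ n then a i else L with hbdef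
  have hba : ∀ i : ℕ, 1 ≤ i → i ≤ n → b i = a i := fun i hi h => if_pos ⟨hi, h⟩
  have hbL : ∀ i : ℕ, n < i → b i = L := fun i h => if_neg (by omega)
  have hdvdL : ∀ l : ℕ, 1 ≤ l → b l ∣ L := by
    intro l hl
    by_cases h : l ≤ n
    · rw [hba l hl h]; exact Finset.dvd_lcm (Finset.mem_Icc.mpr ⟨hl, h⟩)
    · rw [hbL l (by omega)]
  have hprodL : ∀ s : Finset ℕ, (∀ l ∈ s, 1 ≤ l) → (∏ l ∈ s, b l) ∣ L ^ s.card := by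
    intro s hs
    calc (∏ l ∈ s, b l) ∣ ∏ _l ∈ s, L :=
          Finset.prod_dvd_prod_of_dvd _ _ (fun l hl => hdvdL l (hs l hl))
      _ = L ^ s.card := Finset.prod_const L
  have hbleL : ∀ i : ℕ, b i ≤ L := by
    intro i
    by_cases h : 1 ≤ i ∧ i ≤ n
    · rw [hba i h.1 h.2]
      exact Nat.le_of_dvd hLpos (Finset.dvd_lcm (Finset.mem_Icc.mpr h))
    · rw [hbdef]; simp [if_neg h]
  have key : ∀ i j : ℕ, 1 ≤ i → 1 ≤ j →
      (∏ l ∈ Icc 1 i, b l) ∣ ∏ l ∈ Icc (j + 1) (j + i), b l := by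
    intro i j hi hj
    by_cases hij : i + j ≤ n
    · have e1 : ∏ l ∈ Icc 1 i, b l = ∏ l ∈ Icc 1 i, a l :=
        Finset.prod_congr rfl (fun l hl => by
          rw [mem_Icc] at hl; exact hba l hl.1 (by omega))
      have e2 : ∏ l ∈ Icc (j + 1) (j + i), b l = ∏ l ∈ Icc (j + 1) (j + i), a l :=
        Finset.prod_congr rfl (fun l hl => by
          rw [mem_Icc] at hl; exact hba l (by omega) (by omega))
      rw [e1, e2]; exact hdvd i j hi hj hij
    · by_cases hjn : n ≤ j
      · have e2 : ∏ l ∈ Icc (j + 1) (j + i), b l = L ^ i := by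
          rw [Finset.prod_congr rfl (fun l hl => hbL l (by
            rw [mem_Icc] at hl; omega)), Finset.prod_const, Nat.card_Icc]
          congr 1; omega
        rw [e2]
        have := hprodL (Icc 1 i) (fun l hl => (mem_Icc.mp hl).1)
        rwa [Nat.card_Icc, show i + 1 - 1 = i from rfl] at this
      · push_neg at hij hjn
        have hk1 : 1 ≤ n - j := by omega
        have hki : n - j < i := by omega
        rw [show Icc 1 i = Ioc 0 i from Finset.Icc_add_one_left_eq_Ioc 0 i,
            show Icc (j + 1) (j + i) = Ioc j (j + i) from Finset.Icc_add_one_left_eq_Ioc j (j + i),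
            ← Finset.prod_Ioc_consecutive b (show 0 ≤ n - j by omega) (le_of_lt hki),
            ← Finset.prod_Ioc_consecutive b (show j ≤ n by omega) (show n ≤ j + i by omega)]
        apply mul_dvd_mul
        · have e1 : ∏ l ∈ Ioc 0 (n - j), b l = ∏ l ∈ Ioc 0 (n - j), a l :=
            Finset.prod_congr rfl (fun l hl => by
              rw [mem_Ioc] at hl; exact hba l hl.1 (by omega))
          have e2 : ∏ l ∈ Ioc j n, b l = ∏ l ∈ Ioc j n, a l :=
            Finset.prod_congr rfl (fun l hl => by
              rw [mem_Ioc] at hl; exact hba l (by omega) hl.2)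
          rw [e1, e2]
          have := hdvd (n - j) j hk1 hj (by omega)
          rw [Finset.Icc_add_one_left_eq_Ioc, show Icc 1 (n - j) = Ioc 0 (n - j) from Finset.Icc_add_one_left_eq_Ioc 0 (n - j), show j + (n - j) = n by omega] at this
          exact this
        · have h1' := hprodL (Ioc (n - j) i) (fun l hl => by rw [mem_Ioc] at hl; omega)
          rw [Nat.card_Ioc] at h1'
          have e : ∏ l ∈ Ioc n (j + i), b l = L ^ (i - (n - j)) := by
            rw [Finset.prod_congr rfl (fun l hl => hbL l (mem_Ioc.mp hl).1),
              Finset.prod_const, Nat.card_Ioc]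
            congr 1; omega
          rw [e]; exact h1'
  refine ⟨b, hba, ?_, ?_, ?_, key, ⟨L, hbleL⟩, hbL⟩
  · intro i hi
    by_cases h : i ≤ n
    · rw [hba i hi h]; exact hpos i hi h
    · rw [hbL i (by omega)]; exact hLpos
  · rw [hba 1 le_rfl hn, h1]
  · intro i hi
    by_cases h : i + 1 ≤ n
    · rw [hba i hi (by omega), hba (i + 1) (by omega) h]; exact hmono i hi h
    · by_cases h2 : i ≤ n
      · rw [hbL (i + 1) (by omega)]; exact hbleL i
      · rw [hbL i (by omega), hbL (i + 1) (by omega)]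
end

section
/- For a_n = kn with k ∈ ℙ, the sequence (1,2,...,n−1,kn) is realised by the interval obtained by removing the top and bottom elements of the Boolean lattice on n atoms, taking k disjoint copies of the result, and adjoining a new top and a new bottom element. -/
open Relation Filter Topology

/-- A bundled poset with distinguished bottom and top elements. -/
structure BddPoset where
  carrier : Type
  [po : PartialOrder carrier]
  bot : carrier
  top : carrier

attribute [instance] BddPoset.po

/-- `P` (with bottom `b` and top `t`) is a finite binomial interval of length `n` with
atomic function `A` : a finite bounded graded poset of rank `n` in which every
`k`-interval (`1 ≤ k ≤ n`) has exactly `A k` atoms. -/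
def IsBinomialIntervalOn (P : Type*) [PartialOrder P] (b t : P) (A : ℕ → ℕ) (n : ℕ) :
    Prop :=
  Finite P ∧
  (∀ x : P, b ≤ x ∧ x ≤ t) ∧
  (∀ l ∈ CovChains b t, l.length = n + 1) ∧
  (∀ x y : P, x ≤ y → (CovChains x y).Nonempty) ∧
  (∀ x y : P, ∀ l ∈ CovChains x y, ∀ l' ∈ CovChains x y, l.length = l'.length) ∧
  (∀ (x y : P) (k : ℕ), 1 ≤ k → (∃ l ∈ CovChains x y, l.length = k + 1) →
    {z : P | x ⋖ z ∧ z ≤ y}.ncard = A k)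

/-- The atomic sequence `(1, 2, ..., n-1, aN)`. -/
def AtomSeqTrunc (n aN : ℕ) : ℕ → ℕ := fun k => if k = n then aN else k
/-- The Boolean lattice on `n` atoms stripped of its top and bottom elements. -/
def StrippedBoolean (n : ℕ) : Type := {s : Finset (Fin n) // 0 < s.card ∧ s.card < n}

/-- `k` disjoint copies of the stripped Boolean lattice (elements of different copies are
incomparable). -/
def MidCopies (k n : ℕ) : Type := Fin k × StrippedBoolean n

instance (k n : ℕ) : PartialOrder (MidCopies k n) where
  le p q := p.1 = q.1 ∧ p.2.val ⊆ q.2.val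
  le_refl p := ⟨rfl, subset_rfl⟩
  le_trans p q r h h' := ⟨h.1.trans h'.1, h.2.trans h'.2⟩
  le_antisymm p q h h' :=
    Prod.ext h.1 (Subtype.ext (Finset.Subset.antisymm h.2 h'.2))

/-- `k` disjoint copies of the stripped Boolean lattice on `n` atoms, with a new bottom
and a new top element adjoined. -/
abbrev CopiesPoset (k n : ℕ) : Type := WithBot (WithTop (MidCopies k n))

namespace CopiesAux
variable {k n : ℕ}

instance : Finite (StrippedBoolean n) := Subtype.finite
instance : Finite (MidCopies k n) := Finite.instProd

instance finOpt {α : Type} [Finite α] : Finite (Option α) :=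
  Finite.of_equiv _ (Equiv.optionEquivSumPUnit.{0,0} α).symm

def mid (p : MidCopies k n) : CopiesPoset k n := ((p : WithTop (MidCopies k n)) : CopiesPoset k n)

def rk (n : ℕ) {k : ℕ} : CopiesPoset k n → ℕ :=
  WithBot.recBotCoe 0 (WithTop.recTopCoe n (fun p => p.2.val.card))

@[simp] lemma rk_bot : rk n (⊥ : CopiesPoset k n) = 0 := rfl
@[simp] lemma rk_top : rk n ((⊤ : WithTop (MidCopies k n)) : CopiesPoset k n) = n := rfl
@[simp] lemma rk_top' : rk n (⊤ : CopiesPoset k n) = n := rfl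
@[simp] lemma rk_mid (p : MidCopies k n) : rk n (mid p) = p.2.val.card := rfl

example : ((⊤ : WithTop (MidCopies k n)) : CopiesPoset k n) = (⊤ : CopiesPoset k n) := rfl

lemma mid_injective : Function.Injective (mid : MidCopies k n → CopiesPoset k n) :=
  fun _ _ h => WithTop.coe_injective (WithBot.coe_injective h)

lemma mid_le_mid {p q : MidCopies k n} : mid p ≤ mid q ↔ p.1 = q.1 ∧ p.2.val ⊆ q.2.val := by
  rw [mid, mid, WithBot.coe_le_coe, WithTop.coe_le_coe]; rfl

lemma le_mid_iff {x : CopiesPoset k n} {q : MidCopies k n} :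
    x ≤ mid q ↔ x = ⊥ ∨ ∃ p, x = mid p ∧ p.1 = q.1 ∧ p.2.val ⊆ q.2.val := by
  induction x using WithBot.recBotCoe with
  | bot => simp
  | coe a =>
    induction a using WithTop.recTopCoe with
    | top =>
      constructor
      · intro h; exfalso
        rw [mid, WithBot.coe_le_coe] at h
        exact (WithTop.not_top_le_coe _) h
      · rintro (h | ⟨p, h, _⟩) <;> simp [mid] at h
    | coe p =>
      constructor
      · intro h; right; exact ⟨p, rfl, mid_le_mid.mp h⟩
      · rintro (h | ⟨p', h, h2⟩)
        · simp [mid] at h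
        · obtain rfl : p = p' := mid_injective h
          exact mid_le_mid.mpr h2

lemma mid_le_iff {x : CopiesPoset k n} {q : MidCopies k n} :
    mid q ≤ x ↔ x = (⊤ : CopiesPoset k n) ∨ ∃ p, x = mid p ∧ q.1 = p.1 ∧ q.2.val ⊆ p.2.val := by
  induction x using WithBot.recBotCoe with
  | bot =>
    constructor
    · intro h; exact absurd (le_bot_iff.mp h) (by simp [mid])
    · rintro (h | ⟨p, h, _⟩) <;> simp [mid] at h
  | coe a =>
    induction a using WithTop.recTopCoe with
    | top => simp
    | coe p =>
      constructor
      · intro h; right; exact ⟨p, rfl, mid_le_mid.mp h⟩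
      · rintro (h | ⟨p', h, h2⟩)
        · rw [h]; exact le_top
        · obtain rfl : p = p' := mid_injective h
          exact mid_le_mid.mpr h2


lemma rk_le (x : CopiesPoset k n) : rk n x ≤ n := by
  induction x using WithBot.recBotCoe with
  | bot => simp
  | coe a =>
    induction a using WithTop.recTopCoe with
    | top => exact le_of_eq rfl
    | coe p => exact le_of_lt p.2.2.2

lemma rk_strictMono (hn : 0 < n) : ∀ {x y : CopiesPoset k n}, x < y → rk n x < rk n y := by
  intro x y hxy
  induction y using WithBot.recBotCoe with
  | bot => exact absurd hxy (not_lt_bot)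
  | coe a =>
    induction a using WithTop.recTopCoe with
    | top =>
      induction x using WithBot.recBotCoe with
      | bot => exact hn
      | coe b =>
        induction b using WithTop.recTopCoe with
        | top => exact absurd hxy (lt_irrefl _)
        | coe p => exact p.2.2.2
    | coe q =>
      rcases le_mid_iff.mp hxy.le with h | ⟨p, rfl, hpq⟩
      · subst h; exact q.2.2.1
      · simp only [rk_mid]
        refine Finset.card_lt_card (lt_of_le_of_ne hpq.2 ?_)
        intro hval
        exact hxy.ne (congrArg mid (Prod.ext hpq.1 (Subtype.ext hval)))


lemma exists_step (hn : 3 ≤ n) (hk : 1 ≤ k) {x y : CopiesPoset k n} (hxy : x < y) :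
    ∃ z, x < z ∧ z ≤ y ∧ rk n z = rk n x + 1 := by
  have hn0 : 0 < n := by omega
  induction x using WithBot.recBotCoe with
  | bot =>
    -- find z of rank 1 below y
    induction y using WithBot.recBotCoe with
    | bot => exact absurd hxy (lt_irrefl _)
    | coe a =>
      induction a using WithTop.recTopCoe with
      | top =>
        refine ⟨mid (⟨0, hk⟩, ⟨{⟨0, hn0⟩}, by simp, by rw [Finset.card_singleton]; omega⟩), ?_, le_top, ?_⟩
        · exact bot_lt_iff_ne_bot.mpr (by simp [mid])
        · exact (rk_mid _).trans (Finset.card_singleton _)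
      | coe q =>
        obtain ⟨a, ha⟩ := Finset.card_pos.mp q.2.2.1
        refine ⟨mid (q.1, ⟨{a}, by simp, by rw [Finset.card_singleton]; omega⟩), ?_, ?_, ?_⟩
        · exact bot_lt_iff_ne_bot.mpr (by simp [mid])
        · exact mid_le_mid.mpr ⟨rfl, by simpa using ha⟩
        · exact (rk_mid _).trans (Finset.card_singleton _)
  | coe b =>
    induction b using WithTop.recTopCoe with
    | top => exact absurd hxy not_top_lt
    | coe p =>
      rcases mid_le_iff.mp hxy.le with h | ⟨q, rfl, hq1, hq2⟩
      · -- y = ⊤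
        subst h
        by_cases hcard : p.2.val.card + 1 = n
        · exact ⟨_, hxy, le_refl _, by change n = p.2.val.card + 1; omega⟩
        · have hlt : p.2.val.card + 1 < n := lt_of_le_of_ne (by have := p.2.2.2; omega) hcard
          obtain ⟨a, ha⟩ : ∃ a, a ∉ p.2.val := by
            by_contra hc
            push_neg at hc
            have : (Finset.univ : Finset (Fin n)).card ≤ p.2.val.card :=
              Finset.card_le_card (fun a _ => hc a)
            simp at this
            omega
          refine ⟨mid (p.1, ⟨insert a p.2.val, by simp [Finset.card_pos], ?_⟩), ?_, le_top, ?_⟩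
          · rw [Finset.card_insert_of_notMem ha]; exact hlt
          · refine lt_of_le_of_ne (mid_le_mid.mpr ⟨rfl, Finset.subset_insert _ _⟩) ?_
            intro h
            have := (mid_injective h)
            have hv : p.2.val = insert a p.2.val := congrArg (fun z => z.2.val) this
            exact ha (hv ▸ Finset.mem_insert_self a p.2.val)
          · show (insert a p.2.val).card = p.2.val.card + 1
            exact Finset.card_insert_of_notMem ha
      · -- y = mid q
        have hss : p.2.val ⊂ q.2.val := by
          refine lt_of_le_of_ne hq2 ?_
          intro h; exact hxy.ne (congrArg mid (Prod.ext hq1 (Subtype.ext h)))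
        obtain ⟨a, haq, hap⟩ := Finset.exists_of_ssubset hss
        have hcard : (insert a p.2.val).card = p.2.val.card + 1 :=
          Finset.card_insert_of_notMem hap
        refine ⟨mid (p.1, ⟨insert a p.2.val, by simp [Finset.card_pos], ?_⟩), ?_, ?_, ?_⟩
        · rw [hcard]
          have h1 : p.2.val.card < q.2.val.card := Finset.card_lt_card hss
          have h2 : q.2.val.card < n := q.2.2.2
          omega
        · refine lt_of_le_of_ne (mid_le_mid.mpr ⟨rfl, Finset.subset_insert _ _⟩) ?_
          intro h
          have hv : p.2.val = insert a p.2.val := congrArg (fun z => z.2.val) (mid_injective h)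
          exact hap (hv ▸ Finset.mem_insert_self a p.2.val)
        · exact mid_le_mid.mpr ⟨hq1, Finset.insert_subset haq hq2⟩
        · show (insert a p.2.val).card = p.2.val.card + 1
          exact hcard

lemma covBy_iff (hn : 3 ≤ n) (hk : 1 ≤ k) {x y : CopiesPoset k n} :
    x ⋖ y ↔ x < y ∧ rk n y = rk n x + 1 := by
  have hn0 : 0 < n := by omega
  constructor
  · intro h
    obtain ⟨z, hz1, hz2, hz3⟩ := exists_step hn hk h.1
    rcases eq_or_lt_of_le hz2 with rfl | hlt
    · exact ⟨h.1, hz3⟩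
    · exact absurd hlt (h.2 hz1)
  · rintro ⟨h1, h2⟩
    refine ⟨h1, fun z hz1 hz2 => ?_⟩
    have a1 := rk_strictMono hn0 hz1
    have a2 := rk_strictMono hn0 hz2
    omega



lemma chain_rank (hn : 3 ≤ n) (hk : 1 ≤ k) : ∀ (l : List (CopiesPoset k n)), l.Chain' (· ⋖ ·) →
    ∀ x y, l.head? = some x → l.getLast? = some y →
    rk n y + 1 = rk n x + l.length ∧ x ≤ y := by
  intro l
  induction l with
  | nil => intro _ x y h; simp at h
  | cons a t ih =>
    intro hc x y hh hl
    simp only [List.head?_cons, Option.some.injEq] at hh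
    subst hh
    cases t with
    | nil =>
      simp only [List.getLast?_singleton, Option.some.injEq] at hl
      subst hl; exact ⟨by simp, le_refl _⟩
    | cons b t' =>
      rw [List.Chain', List.isChain_cons_cons] at hc
      have hl' : (b :: t').getLast? = some y := by
        rwa [List.getLast?_cons_cons] at hl
      obtain ⟨ih1, ih2⟩ := ih hc.2 b y rfl hl'
      have hrk := hc.1
      constructor
      · have : rk n b = rk n a + 1 := by
          rcases (covBy_iff (n := n) (k := k) hn hk).mp hrk with ⟨_, h⟩
          exact h
        simp only [List.length_cons] at *
        omega
      · exact le_trans hrk.1.le ih2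

lemma chain_exists (hn : 3 ≤ n) (hk : 1 ≤ k) (x y : CopiesPoset k n) (hxy : x ≤ y) :
    ∃ l : List (CopiesPoset k n), l.Chain' (· ⋖ ·) ∧ l.head? = some x ∧ l.getLast? = some y := by
  have hn0 : 0 < n := by omega
  obtain ⟨d, hd⟩ : ∃ d, rk n y - rk n x = d := ⟨_, rfl⟩
  induction d generalizing x with
  | zero =>
    rcases eq_or_lt_of_le hxy with rfl | hlt
    · exact ⟨[x], List.isChain_singleton _, rfl, rfl⟩
    · have := rk_strictMono hn0 hlt; omega
  | succ d ih =>
    rcases eq_or_lt_of_le hxy with rfl | hlt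
    · exact ⟨[x], List.isChain_singleton _, rfl, rfl⟩
    · obtain ⟨z, hz1, hz2, hz3⟩ := exists_step hn hk hlt
      have hry := rk_strictMono hn0 hlt
      obtain ⟨l, hl1, hl2, hl3⟩ := ih z hz2 (by omega)
      cases l with
      | nil => simp at hl2
      | cons a t =>
        simp only [List.head?_cons, Option.some.injEq] at hl2
        subst hl2
        refine ⟨x :: a :: t, ?_, rfl, by rw [List.getLast?_cons_cons]; exact hl3⟩
        rw [List.Chain', List.isChain_cons_cons]
        exact ⟨(covBy_iff hn hk).mpr ⟨hz1, hz3⟩, hl1⟩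

lemma eq_insert_of_card {m : ℕ} {s t : Finset (Fin m)} (hst : s ⊆ t) (hc : t.card = s.card + 1) :
    ∃ a ∉ s, t = insert a s := by
  obtain ⟨a, hat, has⟩ := Finset.exists_of_ssubset
    (HasSubset.Subset.ssubset_of_ne hst (by intro h; subst h; omega))
  refine ⟨a, has, (Finset.eq_of_subset_of_card_le (Finset.insert_subset hat hst) ?_).symm⟩
  rw [Finset.card_insert_of_notMem has, hc]

lemma eq_mid_of_rk {z : CopiesPoset k n} (h0 : rk n z ≠ 0) (hn' : rk n z ≠ n) :
    ∃ p : MidCopies k n, z = mid p := by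
  induction z using WithBot.recBotCoe with
  | bot => exact absurd rfl h0
  | coe a =>
    induction a using WithTop.recTopCoe with
    | top => exact absurd rfl hn'
    | coe p => exact ⟨p, rfl⟩

lemma mid_lt_insert (p : MidCopies k n) (a : Fin n) (ha : a ∉ p.2.val)
    (hp : 0 < (insert a p.2.val).card ∧ (insert a p.2.val).card < n) :
    mid p < mid (p.1, ⟨insert a p.2.val, hp⟩) := by
  refine lt_of_le_of_ne (mid_le_mid.mpr ⟨rfl, Finset.subset_insert _ _⟩) ?_
  intro h'
  have hv : p.2.val = insert a p.2.val := congrArg (fun z => z.2.val) (mid_injective h')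
  exact ha (hv ▸ Finset.mem_insert_self a p.2.val)

lemma above_mid (hn : 3 ≤ n) {p : MidCopies k n} {z : CopiesPoset k n} (hz1 : mid p < z)
    (hz2 : rk n z = p.2.val.card + 1) (hzn : p.2.val.card + 1 < n) :
    ∃ a, a ∉ p.2.val ∧
      ∀ hp, z = mid (p.1, ⟨insert a p.2.val, hp⟩) := by
  rcases mid_le_iff.mp hz1.le with h | ⟨p', rfl, h1, h2⟩
  · subst h
    rw [rk_top'] at hz2
    omega
  · have hc : p'.2.val.card = p.2.val.card + 1 := by simpa using hz2
    obtain ⟨a, ha, hins⟩ := eq_insert_of_card h2 hc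
    refine ⟨a, ha, fun hp => ?_⟩
    obtain ⟨j, s, hs⟩ := p'
    obtain rfl : p.1 = j := h1
    obtain rfl : s = insert a p.2.val := hins
    rfl

lemma atoms_count (hn : 3 ≤ n) (hk : 1 ≤ k) (x y : CopiesPoset k n) (m : ℕ) (hm : 1 ≤ m)
    (hxy : x ≤ y) (hrk : rk n y = rk n x + m) :
    {z : CopiesPoset k n | x ⋖ z ∧ z ≤ y}.ncard = if m = n then k * n else m := by
  have hn0 : 0 < n := by omega
  have hset : {z : CopiesPoset k n | x ⋖ z ∧ z ≤ y}
      = {z | (x < z ∧ rk n z = rk n x + 1) ∧ z ≤ y} := by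
    ext z; simp only [Set.mem_setOf_eq, covBy_iff hn hk]
  rw [hset]
  induction x using WithBot.recBotCoe with
  | bot =>
    induction y using WithBot.recBotCoe with
    | bot => simp at hrk; omega
    | coe a =>
      induction a using WithTop.recTopCoe with
      | top =>
        -- m = n, answer k*n
        have hm' : m = n := by simpa using hrk.symm
        rw [if_pos hm']
        show {z : CopiesPoset k n | ((⊥ : CopiesPoset k n) < z
          ∧ rk n z = rk n (⊥ : CopiesPoset k n) + 1)
          ∧ z ≤ ((⊤ : WithTop (MidCopies k n)) : CopiesPoset k n)}.ncard = k * n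
        have himg : {z : CopiesPoset k n | ((⊥ : CopiesPoset k n) < z ∧ rk n z = rk n (⊥ : CopiesPoset k n) + 1)
            ∧ z ≤ ((⊤ : WithTop (MidCopies k n)) : CopiesPoset k n)}
            = (fun ja : Fin k × Fin n => mid (ja.1, ⟨{ja.2}, by simp, by simp; omega⟩)) ''
              Set.univ := by
          ext z
          simp only [Set.mem_setOf_eq, Set.image_univ, Set.mem_range]
          constructor
          · rintro ⟨⟨hz1, hz2⟩, -⟩
            have h1 : rk n z = 1 := by simpa using hz2
            obtain ⟨p, rfl⟩ := eq_mid_of_rk (z := z) (by omega) (by omega)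
            obtain ⟨j, s, hs⟩ := p
            obtain ⟨a, ha⟩ := Finset.card_eq_one.mp (show s.card = 1 from h1)
            subst ha
            exact ⟨(j, a), rfl⟩
          · rintro ⟨⟨j, a⟩, rfl⟩
            refine ⟨⟨bot_lt_iff_ne_bot.mpr (by simp [mid]), (rk_mid _).trans (Finset.card_singleton _)⟩, le_top⟩
        rw [himg, Set.ncard_image_of_injective _ ?inj, Set.ncard_univ]
        · simp [Nat.card_eq_fintype_card, mul_comm]
        case inj =>
          intro ⟨j, a⟩ ⟨j', a'⟩ h
          have := mid_injective h
          have h1 : j = j' := congrArg Prod.fst this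
          have h2 : ({a} : Finset (Fin n)) = {a'} := congrArg (fun z => z.2.val) this
          simp only [Finset.singleton_inj] at h2
          simp [h1, h2]
      | coe q =>
        -- y = mid q, x = ⊥ : m = card q < n
        have hm' : m = q.2.val.card := by have h : q.2.val.card = 0 + m := hrk; omega
        have hmn : m ≠ n := by have := q.2.2.2; omega
        rw [if_neg hmn]
        show {z : CopiesPoset k n | ((⊥ : CopiesPoset k n) < z
          ∧ rk n z = rk n (⊥ : CopiesPoset k n) + 1) ∧ z ≤ mid q}.ncard = m
        have himg : {z : CopiesPoset k n | ((⊥ : CopiesPoset k n) < z ∧ rk n z = rk n (⊥ : CopiesPoset k n) + 1)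
            ∧ z ≤ mid q}
            = (fun a : Fin n => mid (q.1, ⟨{a}, by simp, by simp; omega⟩)) '' ↑q.2.val := by
          ext z
          simp only [Set.mem_setOf_eq, Set.mem_image, Finset.mem_coe]
          constructor
          · rintro ⟨⟨hz1, hz2⟩, hzq⟩
            have h1 : rk n z = 1 := by simpa using hz2
            obtain ⟨p, rfl⟩ := eq_mid_of_rk (z := z) (by omega) (by omega)
            obtain ⟨j, s, hs⟩ := p
            obtain ⟨a, ha⟩ := Finset.card_eq_one.mp (show s.card = 1 from h1)
            subst ha
            obtain ⟨hj, h2⟩ := mid_le_mid.mp hzq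
            obtain rfl : j = q.1 := hj
            exact ⟨a, h2 (Finset.mem_singleton_self a), rfl⟩
          · rintro ⟨a, ha, rfl⟩
            refine ⟨⟨bot_lt_iff_ne_bot.mpr (by simp [mid]), (rk_mid _).trans (Finset.card_singleton _)⟩,
              mid_le_mid.mpr ⟨rfl, by simpa using ha⟩⟩
        rw [himg, Set.ncard_image_of_injective _ ?inj2, Set.ncard_coe_finset, ← hm']
        case inj2 =>
          intro a a' h
          have h2 : ({a} : Finset (Fin n)) = {a'} := congrArg (fun z => z.2.val) (mid_injective h)
          simpa using h2
  | coe b =>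
    induction b using WithTop.recTopCoe with
    | top =>
      exfalso
      have h1 := rk_le (k := k) (n := n) y
      have h2 : rk n y = n + m := hrk
      omega
    | coe p =>
      rcases mid_le_iff.mp hxy with h | ⟨q, rfl, hq1, hq2⟩
      · -- y = ⊤
        subst h
        have hrk' : n = p.2.val.card + m := hrk
        have hcn : p.2.val.card < n := p.2.2.2
        have hmn : m ≠ n := by have := p.2.2.1; omega
        rw [if_neg hmn]
        by_cases hc1 : p.2.val.card + 1 = n
        · -- only z = ⊤
          have hm1 : m = 1 := by omega
          show {z : CopiesPoset k n | (mid p < z ∧ rk n z = rk n (mid p) + 1)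
            ∧ z ≤ (⊤ : CopiesPoset k n)}.ncard = m
          have hone : {z : CopiesPoset k n | (mid p < z ∧ rk n z = rk n (mid p) + 1)
              ∧ z ≤ (⊤ : CopiesPoset k n)} = {(⊤ : CopiesPoset k n)} := by
            ext z
            simp only [Set.mem_setOf_eq, Set.mem_singleton_iff]
            constructor
            · rintro ⟨⟨hz1, hz2⟩, -⟩
              have hz2' : rk n z = n := by
                have h' : rk n z = p.2.val.card + 1 := hz2
                omega
              induction z using WithBot.recBotCoe with
              | bot => simp at hz2'; omega
              | coe a =>
                induction a using WithTop.recTopCoe with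
                | top => rfl
                | coe pp =>
                  exact absurd (hz2' : pp.2.val.card = n) (ne_of_lt pp.2.2.2)
            · rintro rfl
              refine ⟨⟨lt_of_le_of_ne le_top (by simp [mid]), ?_⟩, le_refl _⟩
              show n = p.2.val.card + 1
              omega
          rw [hone, Set.ncard_singleton, hm1]
        · -- z = mid (insert a p), a ∉ p
          have hlt : p.2.val.card + 1 < n := by omega
          show {z : CopiesPoset k n | (mid p < z ∧ rk n z = rk n (mid p) + 1)
            ∧ z ≤ (⊤ : CopiesPoset k n)}.ncard = m
          have himg : {z : CopiesPoset k n | (mid p < z ∧ rk n z = rk n (mid p) + 1)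
              ∧ z ≤ (⊤ : CopiesPoset k n)}
              = (fun a : Fin n => mid (p.1, ⟨insert a p.2.val,
                  Finset.insert_nonempty a _ |>.card_pos,
                  (Finset.card_insert_le _ _).trans_lt (by omega)⟩)) '' ↑(p.2.valᶜ) := by
            ext z
            simp only [Set.mem_setOf_eq, Set.mem_image, Finset.coe_compl, Set.mem_compl_iff,
              Finset.mem_coe]
            constructor
            · rintro ⟨⟨hz1, hz2⟩, -⟩
              obtain ⟨a, ha, hz⟩ := above_mid hn hz1 (by simpa using hz2) hlt
              exact ⟨a, ha, (hz _).symm⟩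
            · rintro ⟨a, ha, rfl⟩
              exact ⟨⟨mid_lt_insert p a ha _, by
                show (insert a p.2.val).card = p.2.val.card + 1
                exact Finset.card_insert_of_notMem ha⟩, le_top⟩
          rw [himg, Set.ncard_image_of_injOn ?injA, Set.ncard_coe_finset, Finset.card_compl]
          · simp; omega
          case injA =>
            intro a ha b hb h
            simp only [Finset.coe_compl, Set.mem_compl_iff, Finset.mem_coe] at ha hb
            have hv : insert a p.2.val = insert b p.2.val :=
              congrArg (fun z => z.2.val) (mid_injective h)
            have : a ∈ insert b p.2.val := hv ▸ Finset.mem_insert_self a _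
            rcases Finset.mem_insert.mp this with h' | h'
            · exact h'
            · exact absurd h' ha
      · -- y = mid q
        have hrk' : q.2.val.card = p.2.val.card + m := hrk
        have hmn : m ≠ n := by have := q.2.2.2; have := p.2.2.1; omega
        rw [if_neg hmn]
        show {z : CopiesPoset k n | (mid p < z ∧ rk n z = rk n (mid p) + 1)
          ∧ z ≤ mid q}.ncard = m
        have hlt : p.2.val.card + 1 < n := by
          have := q.2.2.2; omega
        have himg : {z : CopiesPoset k n | (mid p < z ∧ rk n z = rk n (mid p) + 1)
            ∧ z ≤ mid q}
            = (fun a : Fin n => mid (p.1, ⟨insert a p.2.val,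
                Finset.insert_nonempty a _ |>.card_pos,
                (Finset.card_insert_le _ _).trans_lt (by omega)⟩)) '' ↑(q.2.val \ p.2.val) := by
          ext z
          simp only [Set.mem_setOf_eq, Set.mem_image, Finset.coe_sdiff, Set.mem_diff,
            Finset.mem_coe]
          constructor
          · rintro ⟨⟨hz1, hz2⟩, hzq⟩
            obtain ⟨a, ha, hz⟩ := above_mid hn hz1 (by simpa using hz2) hlt
            refine ⟨a, ⟨?_, ha⟩, (hz _).symm⟩
            -- a ∈ q
            rw [hz ⟨(Finset.insert_nonempty a _).card_pos,
              (Finset.card_insert_le _ _).trans_lt (by omega)⟩] at hzq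
            have := (mid_le_mid.mp hzq).2
            exact this (Finset.mem_insert_self a _)
          · rintro ⟨a, ⟨haq, hap⟩, rfl⟩
            refine ⟨⟨mid_lt_insert p a hap _, by
              show (insert a p.2.val).card = p.2.val.card + 1
              exact Finset.card_insert_of_notMem hap⟩,
              mid_le_mid.mpr ⟨hq1, Finset.insert_subset haq hq2⟩⟩
        rw [himg, Set.ncard_image_of_injOn ?injB, Set.ncard_coe_finset,
          Finset.card_sdiff_of_subset hq2]
        · omega
        case injB =>
          intro a ha b hb h
          simp only [Finset.coe_sdiff, Set.mem_diff, Finset.mem_coe] at ha hb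
          have hv : insert a p.2.val = insert b p.2.val :=
            congrArg (fun z => z.2.val) (mid_injective h)
          have : a ∈ insert b p.2.val := hv ▸ Finset.mem_insert_self a _
          rcases Finset.mem_insert.mp this with h' | h'
          · exact h'
          · exact absurd h' ha.2
end CopiesAux

/-- for `aN = k * n` with `k ≥ 1`, the sequence `(1, 2, ..., n-1, k*n)` is
realised by the interval obtained from the Boolean lattice on `n` atoms by removing its
top and bottom, taking `k` disjoint copies, and adjoining a new top and a new bottom. -/
theorem copies_of_stripped_boolean_realises (n k : ℕ) (hn : 3 ≤ n) (hk : 1 ≤ k) :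
    IsBinomialIntervalOn (CopiesPoset k n) (⊥ : CopiesPoset k n)
      (((⊤ : WithTop (MidCopies k n)) : WithBot (WithTop (MidCopies k n))) :
        CopiesPoset k n)
      (AtomSeqTrunc n (k * n)) n := by
  classical
  open CopiesAux in
  refine ⟨?_, fun x => ⟨bot_le, le_top⟩, ?_, ?_, ?_, ?_⟩
  · have : Finite (Option (Option (MidCopies k n))) := inferInstance
    exact this
  · intro l hl
    obtain ⟨hc, hh, hlast⟩ := hl
    have h1 := (chain_rank hn hk l hc _ _ hh hlast).1
    have h2 : n + 1 = 0 + l.length := h1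
    omega
  · intro x y hxy
    obtain ⟨l, h1, h2, h3⟩ := chain_exists hn hk x y hxy
    exact ⟨l, ⟨h1, h2, h3⟩⟩
  · intro x y l hl l' hl'
    have a1 := (chain_rank hn hk l hl.1 x y hl.2.1 hl.2.2).1
    have a2 := (chain_rank hn hk l' hl'.1 x y hl'.2.1 hl'.2.2).1
    omega
  · rintro x y m hm ⟨l, hl, hlen⟩
    obtain ⟨h1, h2⟩ := chain_rank hn hk l hl.1 x y hl.2.1 hl.2.2
    rw [hlen] at h1
    have hrk : rk n y = rk n x + m := by omega
    have := atoms_count hn hk x y m hm h2 hrk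
    simpa [AtomSeqTrunc] using this
end

section
/- The infinite sequence (1, 2, 3, 4, 4, 6, 6, 6, ...) = (1,2,3,4²,6^∞) satisfies the binomial compatibility condition (1) but is not realisable as the atomic sequence of any binomial poset. -/
open Relation Filter Topology

/-- The first binomial poset compatibility condition (1): `a 1 = 1`, the sequence is
positive and weakly increasing, and all generalized binomial coefficients are integers. -/
def Cond1 (A : ℕ → ℕ) : Prop :=
  A 1 = 1 ∧ (∀ i : ℕ, 1 ≤ i → 0 < A i) ∧ (∀ i : ℕ, 1 ≤ i → A i ≤ A (i + 1)) ∧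
  ∀ i j : ℕ, 1 ≤ i → 1 ≤ j →
    (∏ l ∈ Finset.Icc 1 i, A l) ∣ ∏ l ∈ Finset.Icc (j + 1) (j + i), A l
/-- The sequence `(1, 2, 3, 4, 4, 6, 6, 6, ...) = (1,2,3,4²,6^∞)`. -/
def A616 : ℕ → ℕ := fun i => if i ≤ 3 then i else if i ≤ 5 then 4 else 6


namespace Scratch
variable {P : Type*} [PartialOrder P]

/-- the middle elements of interval `[p,q]` (atoms). -/
def mids (p q : P) : Set P := {z : P | p ⋖ z ∧ z ≤ q}

open scoped Classical in
noncomputable def otherMid (p q m : P) : P :=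
  if h : ∃ a, mids p q \ {m} = {a} then h.choose else m

lemma chain3_mem {p z q : P} (h1 : p ⋖ z) (h2 : z ⋖ q) : [p, z, q] ∈ CovChains p q := by
  refine ⟨?_, rfl, rfl⟩
  simp [List.Chain', List.isChain_cons_cons, h1, h2]

lemma chain2_mem {p q : P} (h1 : p ⋖ q) : [p, q] ∈ CovChains p q := by
  refine ⟨?_, rfl, rfl⟩
  simp [List.Chain', List.isChain_cons_cons, h1]

lemma chain4_mem {p z u q : P} (h1 : p ⋖ z) (h2 : z ⋖ u) (h3 : u ⋖ q) :
    [p, z, u, q] ∈ CovChains p q := by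
  refine ⟨?_, rfl, rfl⟩
  simp [List.Chain', List.isChain_cons_cons, h1, h2, h3]

variable {b : P} {A : ℕ → ℕ}

/-- every chain in an interval with a known-length chain has that length -/
lemma all_chains_len (hB : IsBinomialPoset P b A) {p q : P} {n : ℕ}
    (h : ∃ l ∈ CovChains p q, l.length = n) {l : List P} (hl : l ∈ CovChains p q) :
    l.length = n := by
  obtain ⟨l', hl', hlen⟩ := h
  rw [hB.graded p q l hl l' hl']; exact hlen

/-- stepping down: a middle of an `(n+1)`-interval heads an `n`-interval -/
lemma step_down (hB : IsBinomialPoset P b A) {p q z : P} {n : ℕ}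
    (h : ∃ l ∈ CovChains p q, l.length = n + 2) (hz : z ∈ mids p q) :
    ∃ l ∈ CovChains z q, l.length = n + 1 := by
  obtain ⟨l', hl'⟩ := hB.chain_nonempty z q hz.2
  refine ⟨l', hl', ?_⟩
  obtain ⟨hc, hh, hg⟩ := hl'
  match l', hh with
  | a :: t, hh =>
    have ha : a = z := by simpa using hh
    subst ha
    have : (p :: a :: t) ∈ CovChains p q := by
      refine ⟨?_, rfl, ?_⟩
      · exact List.isChain_cons_cons.mpr ⟨hz.1, hc⟩
      · simpa using hg
    have := all_chains_len hB h this
    simpa using this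

lemma mem_mids_self {p q : P} (h : p ⋖ q) : q ∈ mids p q := ⟨h, le_rfl⟩

/-- in a 2-interval, middles cover the top -/
lemma mids_covby_top (hB : IsBinomialPoset P b A) {p q z : P}
    (h : ∃ l ∈ CovChains p q, l.length = 3) (hz : z ∈ mids p q) : z ⋖ q := by
  obtain ⟨l, hl, hlen⟩ := step_down hB h hz
  obtain ⟨hc, hh, hg⟩ := hl
  match l, hlen with
  | [a, c], _ =>
    have ha : a = z := by simpa using hh
    have hcq : c = q := by simpa using hg
    subst ha; subst hcq
    simpa [List.Chain', List.isChain_cons_cons] using hc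

lemma mids_subset_Icc (p q : P) : mids p q ⊆ Set.Icc p q :=
  fun z hz => ⟨hz.1.le, hz.2⟩

lemma mids_finite (hB : IsBinomialPoset P b A) (p q : P) : (mids p q).Finite :=
  (hB.locFin p q).subset (mids_subset_Icc p q)

lemma mids_ncard (hB : IsBinomialPoset P b A) {p q : P} {n : ℕ} (hn : 1 ≤ n)
    (h : ∃ l ∈ CovChains p q, l.length = n + 1) : (mids p q).ncard = A n :=
  hB.atoms p q n hn h

/-- two-element facts about `otherMid` -/
lemma otherMid_spec {p q m : P} (h2 : (mids p q).ncard = 2) (hm : m ∈ mids p q) :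
    otherMid p q m ∈ mids p q ∧ otherMid p q m ≠ m ∧
      ∀ c ∈ mids p q, c ≠ m → c = otherMid p q m := by
  have hfin : (mids p q).Finite := by
    rcases Set.ncard_eq_two.mp h2 with ⟨a, c, hac, hset⟩
    rw [hset]; exact (Set.finite_singleton c).insert a
  have h1 : (mids p q \ {m}).ncard = 1 := by
    rw [Set.ncard_diff_singleton_of_mem hm, h2]
  obtain ⟨a, ha⟩ := Set.ncard_eq_one.mp h1
  have hex : ∃ a, mids p q \ {m} = {a} := ⟨a, ha⟩
  have hca : hex.choose = a :=
    Set.singleton_eq_singleton_iff.mp (hex.choose_spec.symm.trans ha)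
  have hdef : otherMid p q m = a := by
    unfold otherMid; rw [dif_pos hex]; exact hca
  have hamem : a ∈ mids p q \ {m} := by rw [ha]; rfl
  refine ⟨hdef ▸ hamem.1, by rw [hdef]; simpa using hamem.2, ?_⟩
  intro c hc hcm
  have : c ∈ mids p q \ {m} := ⟨hc, by simpa using hcm⟩
  rw [ha] at this; rw [hdef]; simpa using this

lemma otherMid_invol {p q m : P} (h2 : (mids p q).ncard = 2) (hm : m ∈ mids p q) :
    otherMid p q (otherMid p q m) = m := by
  obtain ⟨hmem, hne, _⟩ := otherMid_spec h2 hm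
  obtain ⟨_, _, huniq⟩ := otherMid_spec h2 hmem
  exact (huniq m hm (Ne.symm hne)).symm

end Scratch


namespace Scratch
variable {P : Type*} {β : Type*}

lemma sigma_finite {S : Set P} {T : P → Set β} (hS : S.Finite)
    (hT : ∀ z ∈ S, (T z).Finite) :
    {r : P × β | r.1 ∈ S ∧ r.2 ∈ T r.1}.Finite := by
  have : {r : P × β | r.1 ∈ S ∧ r.2 ∈ T r.1} ⊆ S ×ˢ (⋃ z ∈ S, T z) := by
    rintro ⟨a, c⟩ ⟨h1, h2⟩
    exact ⟨h1, Set.mem_biUnion h1 h2⟩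
  exact ((hS.prod (hS.biUnion hT)).subset this)

lemma ncard_sigma {T : P → Set β} {m : ℕ} {S : Set P} (hS : S.Finite)
    (hT : ∀ z ∈ S, (T z).Finite) (hm : ∀ z ∈ S, (T z).ncard = m) :
    {r : P × β | r.1 ∈ S ∧ r.2 ∈ T r.1}.ncard = S.ncard * m := by
  refine Set.Finite.induction_on (motive := fun S _ => (∀ z ∈ S, (T z).Finite) →
    (∀ z ∈ S, (T z).ncard = m) →
    {r : P × β | r.1 ∈ S ∧ r.2 ∈ T r.1}.ncard = S.ncard * m) S hS (by simp) ?_ hT hm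
  clear hT hm hS S
  intro a s ha hs ih hT hm
  have hT' : ∀ z ∈ s, (T z).Finite := fun z hz => hT z (Set.mem_insert_of_mem a hz)
  have hm' : ∀ z ∈ s, (T z).ncard = m := fun z hz => hm z (Set.mem_insert_of_mem a hz)
  have hsplit : {r : P × β | r.1 ∈ insert a s ∧ r.2 ∈ T r.1} =
      (Prod.mk a '' T a) ∪ {r : P × β | r.1 ∈ s ∧ r.2 ∈ T r.1} := by
    ext ⟨x, c⟩
    simp only [Set.mem_insert_iff, Set.mem_setOf_eq, Set.mem_union, Set.mem_image]
    constructor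
    · rintro ⟨(rfl | hx), hc⟩
      · exact Or.inl ⟨c, hc, rfl⟩
      · exact Or.inr ⟨hx, hc⟩
    · rintro (⟨c', hc', heq⟩ | ⟨hx, hc⟩)
      · rw [Prod.mk.injEq] at heq
        obtain ⟨rfl, rfl⟩ := heq
        exact ⟨Or.inl rfl, hc'⟩
      · exact ⟨Or.inr hx, hc⟩
  rw [hsplit, Set.ncard_union_eq ?dis ?f1 ?f2]
  · rw [Set.ncard_image_of_injective _ (fun x y h => (Prod.mk.injEq .. ▸ h).2), hm a (Set.mem_insert a s),
      ih hT' hm', Set.ncard_insert_of_notMem ha hs]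
    ring
  case dis =>
    rw [Set.disjoint_left]
    rintro ⟨x, c⟩ ⟨c', _, heq⟩ ⟨hx, _⟩
    cases heq
    exact ha hx
  case f1 => exact (hT a (Set.mem_insert a s)).image _
  case f2 => exact sigma_finite hs hT'

end Scratch




namespace Scratch
variable {P : Type*} [PartialOrder P]

/-- pairs `(a, c)` with `p ⋖ a ⋖ c ⋖ q` : interior of a 3-interval. -/
def Tset (p q : P) : Set (P × P) := {r | p ⋖ r.1 ∧ r.1 ⋖ r.2 ∧ r.2 ⋖ q}

/-- flip the lower middle element -/
noncomputable def Fmap (p : P) (r : P × P) : P × P := (otherMid p r.2 r.1, r.2)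
/-- flip the upper middle element -/
noncomputable def Gmap (q : P) (r : P × P) : P × P := (r.1, otherMid r.1 q r.2)

variable {b : P} {A : ℕ → ℕ}

section FG
variable (hB : IsBinomialPoset P b A) (hA2 : A 2 = 2) {p q : P}
include hB hA2

lemma Fmap_basic {r : P × P} (hr : r ∈ Tset p q) :
    Fmap p r ∈ Tset p q ∧ Fmap p (Fmap p r) = r ∧ (Fmap p r).1 ≠ r.1 ∧ (Fmap p r).2 = r.2 := by
  obtain ⟨h1, h2, h3⟩ := hr
  have hch : ∃ l ∈ CovChains p r.2, l.length = 3 := ⟨[p, r.1, r.2], chain3_mem h1 h2, rfl⟩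
  have hc2 : (mids p r.2).ncard = 2 := by rw [mids_ncard hB one_le_two hch, hA2]
  have hm : r.1 ∈ mids p r.2 := ⟨h1, h2.le⟩
  obtain ⟨hmem, hne, _⟩ := otherMid_spec hc2 hm
  have hcov : otherMid p r.2 r.1 ⋖ r.2 := mids_covby_top hB hch hmem
  refine ⟨⟨hmem.1, hcov, h3⟩, ?_, hne, rfl⟩
  show (otherMid p r.2 (otherMid p r.2 r.1), r.2) = r
  rw [otherMid_invol hc2 hm]

lemma Gmap_basic {r : P × P} (hr : r ∈ Tset p q) :
    Gmap q r ∈ Tset p q ∧ Gmap q (Gmap q r) = r ∧ (Gmap q r).2 ≠ r.2 ∧ (Gmap q r).1 = r.1 := by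
  obtain ⟨h1, h2, h3⟩ := hr
  have hch : ∃ l ∈ CovChains r.1 q, l.length = 3 := ⟨[r.1, r.2, q], chain3_mem h2 h3, rfl⟩
  have hc2 : (mids r.1 q).ncard = 2 := by rw [mids_ncard hB one_le_two hch, hA2]
  have hm : r.2 ∈ mids r.1 q := ⟨h2, h3.le⟩
  obtain ⟨hmem, hne, _⟩ := otherMid_spec hc2 hm
  have hcov : otherMid r.1 q r.2 ⋖ q := mids_covby_top hB hch hmem
  refine ⟨⟨h1, hmem.1, hcov⟩, ?_, hne, rfl⟩
  show (r.1, otherMid r.1 q (otherMid r.1 q r.2)) = r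
  rw [otherMid_invol hc2 hm]

lemma FG_ne {r : P × P} (hr : r ∈ Tset p q) : Fmap p r ≠ Gmap q r := by
  intro h
  have h1 := (Fmap_basic hB hA2 hr).2.2.1
  have h2 := (Gmap_basic hB hA2 hr).2.2.2
  rw [h] at h1
  exact h1 h2

lemma Fmap_ne {r : P × P} (hr : r ∈ Tset p q) : Fmap p r ≠ r := by
  intro h
  exact (Fmap_basic hB hA2 hr).2.2.1 (by rw [h])

lemma Gmap_ne {r : P × P} (hr : r ∈ Tset p q) : Gmap q r ≠ r := by
  intro h
  exact (Gmap_basic hB hA2 hr).2.2.1 (by rw [h])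

lemma Tset_finite : (Tset p q).Finite := by
  have : Tset p q ⊆ Set.Icc p q ×ˢ Set.Icc p q := by
    rintro ⟨a, c⟩ ⟨h1, h2, h3⟩
    exact ⟨⟨h1.le, h2.le.trans h3.le⟩, ⟨h1.le.trans h2.le, h3.le⟩⟩
  exact ((hB.locFin p q).prod (hB.locFin p q)).subset this

lemma Tset_ncard (hA3 : A 3 = 3) (hpq : ∃ l ∈ CovChains p q, l.length = 4) :
    (Tset p q).ncard = 6 := by
  have hTeq : Tset p q = {r : P × P | r.1 ∈ mids p q ∧ r.2 ∈ mids r.1 q} := by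
    ext ⟨a, c⟩
    constructor
    · rintro ⟨h1, h2, h3⟩
      exact ⟨⟨h1, h2.le.trans h3.le⟩, h2, h3.le⟩
    · rintro ⟨ha, hc⟩
      have hstep : ∃ l ∈ CovChains a q, l.length = 3 := step_down hB hpq ha
      exact ⟨ha.1, hc.1, mids_covby_top hB hstep hc⟩
  rw [hTeq]
  have h3 : (mids p q).ncard = 3 := by rw [mids_ncard hB (by norm_num) hpq, hA3]
  have hc : ∀ z ∈ mids p q, (mids z q).ncard = 2 := by
    intro z hz
    rw [mids_ncard hB one_le_two (step_down hB hpq hz), hA2]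
  have := ncard_sigma (T := fun z => mids z q) (m := 2) (mids_finite hB p q)
    (fun z _ => mids_finite hB z q) hc
  rw [this, h3]

end FG
end Scratch

namespace Scratch
variable {P : Type*} [PartialOrder P] {b : P} {A : ℕ → ℕ}
variable (hB : IsBinomialPoset P b A) (hA2 : A 2 = 2) {p q : P}
include hB hA2

lemma sixcycle (hA3 : A 3 = 3) (hpq : ∃ l ∈ CovChains p q, l.length = 4)
    {r0 : P × P} (h0 : r0 ∈ Tset p q) :
    Fmap p (Gmap q (Fmap p (Gmap q (Fmap p (Gmap q r0))))) = r0 := by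
  have Fm : ∀ {r}, r ∈ Tset p q → Fmap p r ∈ Tset p q := fun hr => (Fmap_basic hB hA2 hr).1
  have Fi : ∀ {r}, r ∈ Tset p q → Fmap p (Fmap p r) = r := fun hr => (Fmap_basic hB hA2 hr).2.1
  have Gm : ∀ {r}, r ∈ Tset p q → Gmap q r ∈ Tset p q := fun hr => (Gmap_basic hB hA2 hr).1
  have Gi : ∀ {r}, r ∈ Tset p q → Gmap q (Gmap q r) = r := fun hr => (Gmap_basic hB hA2 hr).2.1
  set r1 := Gmap q r0 with hr1
  set r2 := Fmap p r1 with hr2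
  set r3 := Gmap q r2 with hr3
  set r4 := Fmap p r3 with hr4
  set r5 := Gmap q r4 with hr5
  have h1 : r1 ∈ Tset p q := Gm h0
  have h2 : r2 ∈ Tset p q := Fm h1
  have h3 : r3 ∈ Tset p q := Gm h2
  have h4 : r4 ∈ Tset p q := Fm h3
  have h5 : r5 ∈ Tset p q := Gm h4
  have gr1 : Gmap q r1 = r0 := by rw [hr1, Gi h0]
  have fr2 : Fmap p r2 = r1 := by rw [hr2, Fi h1]
  have gr3 : Gmap q r3 = r2 := by rw [hr3, Gi h2]
  have fr4 : Fmap p r4 = r3 := by rw [hr4, Fi h3]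
  have gr5 : Gmap q r5 = r4 := by rw [hr5, Gi h4]
  have n01 : r0 ≠ r1 := fun h => Gmap_ne hB hA2 h0 (by rw [← hr1, ← h])
  have n12 : r1 ≠ r2 := fun h => Fmap_ne hB hA2 h1 (by rw [← hr2, ← h])
  have n23 : r2 ≠ r3 := fun h => Gmap_ne hB hA2 h2 (by rw [← hr3, ← h])
  have n34 : r3 ≠ r4 := fun h => Fmap_ne hB hA2 h3 (by rw [← hr4, ← h])
  have n45 : r4 ≠ r5 := fun h => Gmap_ne hB hA2 h4 (by rw [← hr5, ← h])
  have n02 : r0 ≠ r2 := fun h => FG_ne hB hA2 h1 (by rw [← hr2, ← h, gr1])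
  have n13 : r1 ≠ r3 := fun h => FG_ne hB hA2 h2 (by rw [fr2, h, hr3])
  have n24 : r2 ≠ r4 := fun h => FG_ne hB hA2 h3 (by rw [← hr4, ← h, gr3])
  have n35 : r3 ≠ r5 := fun h => FG_ne hB hA2 h4 (by rw [fr4, h, hr5])
  have n03 : r0 ≠ r3 := fun h => n12 (by rw [hr1, h, gr3])
  have n14 : r1 ≠ r4 := fun h => n23 (by rw [hr2, h, fr4])
  have n25 : r2 ≠ r5 := fun h => n34 (by rw [hr3, h, gr5])
  have n04 : r0 ≠ r4 := by
    intro h04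
    have fr0 : Fmap p r0 = r3 := by rw [h04, fr4]
    have fr3 : Fmap p r3 = r0 := by rw [← hr4, ← h04]
    have FO : ∀ r, r ∈ ({r0, r1, r2, r3} : Set (P × P)) →
        Fmap p r ∈ ({r0, r1, r2, r3} : Set (P × P)) := by
      rintro r (rfl | rfl | rfl | rfl)
      · simp [fr0]
      · rw [← hr2]; simp
      · simp [fr2]
      · simp [fr3]
    have GO : ∀ r, r ∈ ({r0, r1, r2, r3} : Set (P × P)) →
        Gmap q r ∈ ({r0, r1, r2, r3} : Set (P × P)) := by
      rintro r (rfl | rfl | rfl | rfl)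
      · rw [← hr1]; simp
      · simp [gr1]
      · rw [← hr3]; simp
      · simp [gr3]
    have hOsub : ({r0, r1, r2, r3} : Set (P × P)) ⊆ Tset p q := by
      rintro r (rfl | rfl | rfl | rfl) <;> assumption
    have hOcard : ({r0, r1, r2, r3} : Set (P × P)).ncard = 4 := by
      rw [Set.ncard_insert_of_notMem (by simp [n01, n02, n03]),
        Set.ncard_insert_of_notMem (by simp [n12, n13]),
        Set.ncard_insert_of_notMem (by simp [n23]), Set.ncard_singleton]
    have hT6 : (Tset p q).ncard = 6 := Tset_ncard hB hA2 hA3 hpq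
    have hC2 : ((Tset p q) \ ({r0, r1, r2, r3} : Set (P × P))).ncard = 2 := by
      rw [Set.ncard_diff hOsub, hOcard, hT6]
    obtain ⟨e1, e2, hne, hCeq⟩ := Set.ncard_eq_two.mp hC2
    have he1 : e1 ∈ Tset p q \ ({r0, r1, r2, r3} : Set (P × P)) := by
      rw [hCeq]; exact Set.mem_insert e1 {e2}
    have Fc : Fmap p e1 ∈ Tset p q \ ({r0, r1, r2, r3} : Set (P × P)) := by
      refine ⟨Fm he1.1, fun hmem => he1.2 ?_⟩
      have hx := FO _ hmem
      rwa [Fi he1.1] at hx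
    have Gc : Gmap q e1 ∈ Tset p q \ ({r0, r1, r2, r3} : Set (P × P)) := by
      refine ⟨Gm he1.1, fun hmem => he1.2 ?_⟩
      have hx := GO _ hmem
      rwa [Gi he1.1] at hx
    rw [hCeq] at Fc Gc
    have hFe1 : Fmap p e1 = e2 := by
      rcases Fc with h | h
      · exact absurd h (Fmap_ne hB hA2 he1.1)
      · exact h
    have hGe1 : Gmap q e1 = e2 := by
      rcases Gc with h | h
      · exact absurd h (Gmap_ne hB hA2 he1.1)
      · exact h
    exact FG_ne hB hA2 he1.1 (hFe1.trans hGe1.symm)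
  have n15 : r1 ≠ r5 := fun h => n04 (by rw [← gr1, h, gr5])
  have n05 : r0 ≠ r5 := fun h => n14 (by rw [hr1, h, gr5])
  have hT6 : (Tset p q).ncard = 6 := Tset_ncard hB hA2 hA3 hpq
  have hsub : ({r0, r1, r2, r3, r4, r5} : Set (P × P)) ⊆ Tset p q := by
    rintro r (rfl | rfl | rfl | rfl | rfl | rfl) <;> assumption
  have hS6card : ({r0, r1, r2, r3, r4, r5} : Set (P × P)).ncard = 6 := by
    rw [Set.ncard_insert_of_notMem (by simp [n01, n02, n03, n04, n05]),
      Set.ncard_insert_of_notMem (by simp [n12, n13, n14, n15]),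
      Set.ncard_insert_of_notMem (by simp [n23, n24, n25]),
      Set.ncard_insert_of_notMem (by simp [n34, n35]),
      Set.ncard_insert_of_notMem (by simp [n45]), Set.ncard_singleton]
  have hTeq : ({r0, r1, r2, r3, r4, r5} : Set (P × P)) = Tset p q :=
    Set.eq_of_subset_of_ncard_le hsub (by rw [hT6, hS6card]) (Tset_finite hB hA2)
  have hF5 : Fmap p r5 ∈ ({r0, r1, r2, r3, r4, r5} : Set (P × P)) := by
    rw [hTeq]; exact Fm h5
  rcases hF5 with h | h | h | h | h | h
  · exact h
  · exfalso
    have : r5 = r2 := by rw [← Fi h5, h, ← hr2]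
    exact n25 this.symm
  · exfalso
    have : r5 = r1 := by rw [← Fi h5, h, fr2]
    exact n15 this.symm
  · exfalso
    have : r5 = r4 := by rw [← Fi h5, h, ← hr4]
    exact n45 this.symm
  · exfalso
    have : r5 = r3 := by rw [← Fi h5, h, fr4]
    exact n35 this.symm
  · exact absurd h (Fmap_ne hB hA2 h5)

/-- the braid relation for the two flips on a 3-interval -/
lemma braid_FG (hA3 : A 3 = 3) (hpq : ∃ l ∈ CovChains p q, l.length = 4)
    {r : P × P} (hr : r ∈ Tset p q) :
    Fmap p (Gmap q (Fmap p r)) = Gmap q (Fmap p (Gmap q r)) := by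
  have Fm : ∀ {r}, r ∈ Tset p q → Fmap p r ∈ Tset p q := fun hr => (Fmap_basic hB hA2 hr).1
  have Fi : ∀ {r}, r ∈ Tset p q → Fmap p (Fmap p r) = r := fun hr => (Fmap_basic hB hA2 hr).2.1
  have Gm : ∀ {r}, r ∈ Tset p q → Gmap q r ∈ Tset p q := fun hr => (Gmap_basic hB hA2 hr).1
  have Gi : ∀ {r}, r ∈ Tset p q → Gmap q (Gmap q r) = r := fun hr => (Gmap_basic hB hA2 hr).2.1
  have e0 := sixcycle hB hA2 hA3 hpq hr
  -- e0 : F (G (F (G (F (G r))))) = r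
  have e1 : Gmap q (Fmap p (Gmap q (Fmap p (Gmap q r)))) = Fmap p r := by
    have h' := congrArg (Fmap p) e0
    rwa [Fi (Gm (Fm (Gm (Fm (Gm hr)))))] at h'
  have e2 : Fmap p (Gmap q (Fmap p (Gmap q r))) = Gmap q (Fmap p r) := by
    have h' := congrArg (Gmap q) e1
    rwa [Gi (Fm (Gm (Fm (Gm hr))))] at h'
  have e3 := congrArg (Fmap p) e2
  rw [Fi (Gm (Fm (Gm hr)))] at e3
  exact e3.symm

end Scratch

namespace Scratch

/-- the Coxeter word identity `(s1 s2 s3 s4)^5 = 1`, pointwise. -/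
lemma word_identity {α : Type*} (a b c d : α → α)
    (ha : ∀ x, a (a x) = x) (hb : ∀ x, b (b x) = x)
    (hc : ∀ x, c (c x) = x) (hd : ∀ x, d (d x) = x)
    (hab : ∀ x, a (b (a x)) = b (a (b x)))
    (hbc : ∀ x, b (c (b x)) = c (b (c x)))
    (hcd : ∀ x, c (d (c x)) = d (c (d x)))
    (hac : ∀ x, a (c x) = c (a x))
    (had : ∀ x, a (d x) = d (a x))
    (hbd : ∀ x, b (d x) = d (b x)) (x : α) :
    a (b (c (d (a (b (c (d (a (b (c (d (a (b (c (d (a (b (c (d x))))))))))))))))))) = x := by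
  have K1 : ∀ x, a (b (c (d (a x)))) = b (a (b (c (d x)))) := by
    intro x; rw [← had, ← hac, hab]
  have K2 : ∀ x, a (b (c (d (b x)))) = c (a (b (c (d x)))) := by
    intro x; rw [← hbd, hbc, hac]
  have K3 : ∀ x, a (b (c (d (c x)))) = d (a (b (c (d x)))) := by
    intro x; rw [hcd, hbd, had]
  have K4 : ∀ x, a (b (c (d (d x)))) = a (b (c x)) := by
    intro x; rw [hd]
  have H1 : ∀ x, a (b (c (a x))) = b (a (b (c x))) := by
    intro x; rw [← hac, hab]
  have H2 : ∀ x, a (b (c (b x))) = c (a (b (c x))) := by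
    intro x; rw [hbc, hac]
  have H3 : ∀ x, a (b (c (c x))) = a (b x) := by
    intro x; rw [hc]
  have L1 : ∀ x, b (c (d (b x))) = c (b (c (d x))) := by
    intro x; rw [← hbd, hbc]
  have L2 : ∀ x, b (c (d (c x))) = d (b (c (d x))) := by
    intro x; rw [hcd, hbd]
  calc a (b (c (d (a (b (c (d (a (b (c (d (a (b (c (d (a (b (c (d x))))))))))))))))))) = b (a (b (c (d (b (c (d (a (b (c (d (a (b (c (d (a (b (c (d x))))))))))))))))))) := by rw [K1]
    _ = b (c (a (b (c (d (c (d (a (b (c (d (a (b (c (d (a (b (c (d x))))))))))))))))))) := by rw [K2]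
    _ = b (c (d (a (b (c (d (d (a (b (c (d (a (b (c (d (a (b (c (d x))))))))))))))))))) := by rw [K3]
    _ = b (c (d (a (b (c (a (b (c (d (a (b (c (d (a (b (c (d x))))))))))))))))) := by rw [K4]
    _ = b (c (d (b (a (b (c (b (c (d (a (b (c (d (a (b (c (d x))))))))))))))))) := by rw [H1]
    _ = b (c (d (b (c (a (b (c (c (d (a (b (c (d (a (b (c (d x))))))))))))))))) := by rw [H2]
    _ = b (c (d (b (c (a (b (d (a (b (c (d (a (b (c (d x))))))))))))))) := by rw [H3]
    _ = b (c (d (b (c (a (d (b (a (b (c (d (a (b (c (d x))))))))))))))) := by rw [hbd]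
    _ = b (c (d (b (c (d (a (b (a (b (c (d (a (b (c (d x))))))))))))))) := by rw [had]
    _ = b (c (d (b (c (d (b (a (b (b (c (d (a (b (c (d x))))))))))))))) := by rw [hab]
    _ = b (c (d (b (c (d (b (a (c (d (a (b (c (d x))))))))))))) := by rw [hb]
    _ = b (c (d (b (c (d (b (c (a (d (a (b (c (d x))))))))))))) := by rw [hac]
    _ = b (c (d (b (c (d (b (c (d (a (a (b (c (d x))))))))))))) := by rw [had]
    _ = b (c (d (b (c (d (b (c (d (b (c (d x))))))))))) := by rw [ha]
    _ = c (b (c (d (c (d (b (c (d (b (c (d x))))))))))) := by rw [L1]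
    _ = c (d (b (c (d (d (b (c (d (b (c (d x))))))))))) := by rw [L2]
    _ = c (d (b (c (b (c (d (b (c (d x))))))))) := by rw [hd]
    _ = c (d (c (b (c (c (d (b (c (d x))))))))) := by rw [hbc]
    _ = c (d (c (b (d (b (c (d x))))))) := by rw [hc]
    _ = d (c (d (b (d (b (c (d x))))))) := by rw [hcd]
    _ = d (c (d (d (b (b (c (d x))))))) := by rw [hbd]
    _ = d (c (b (b (c (d x))))) := by rw [hd]
    _ = d (c (c (d x))) := by rw [hb]
    _ = d (d x) := by rw [hc]
    _ = x := by rw [hd]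

end Scratch

namespace Scratch
variable {P : Type*} [PartialOrder P]

/-- saturated 4-tuples `b ⋖ z ⋖ u ⋖ v ⋖ w ≤ y` -/
def Qset (b y : P) : Set (P × P × P × P) :=
  {t | t.1 ∈ mids b y ∧ t.2.1 ∈ mids t.1 y ∧ t.2.2.1 ∈ mids t.2.1 y ∧ t.2.2.2 ∈ mids t.2.2.1 y}

noncomputable def m1 (b : P) (t : P × P × P × P) : P × P × P × P :=
  (otherMid b t.2.1 t.1, t.2)
noncomputable def m2 (t : P × P × P × P) : P × P × P × P :=
  (t.1, otherMid t.1 t.2.2.1 t.2.1, t.2.2)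
noncomputable def m3 (t : P × P × P × P) : P × P × P × P :=
  (t.1, t.2.1, otherMid t.2.1 t.2.2.2 t.2.2.1, t.2.2.2)
noncomputable def m4 (y : P) (t : P × P × P × P) : P × P × P × P :=
  (t.1, t.2.1, t.2.2.1, otherMid t.2.2.1 y t.2.2.2)

lemma cov_of_len2 {p q : P} (h : ∃ l ∈ CovChains p q, l.length = 2) : p ⋖ q := by
  obtain ⟨l, ⟨hc, hh, hg⟩, hlen⟩ := h
  match l, hlen with
  | [a, c], _ =>
    have ha : a = p := by simpa using hh
    have hcq : c = q := by simpa using hg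
    subst ha; subst hcq
    simpa [List.Chain', List.isChain_cons_cons] using hc

variable {b : P} {A : ℕ → ℕ}
variable (hB : IsBinomialPoset P b A) (hA2 : A 2 = 2) (hA3 : A 3 = 3)
variable {y : P} (hy : ∃ l ∈ CovChains b y, l.length = 6)
include hB hA2 hy

/-- all the cover and interval facts for a member of `Qset` -/
lemma Qset_facts {t : P × P × P × P} (ht : t ∈ Qset b y) :
    (t.1, t.2.1) ∈ Tset b t.2.2.1 ∧ (t.2.1, t.2.2.1) ∈ Tset t.1 t.2.2.2 ∧
    t.2.2 ∈ Tset t.2.1 y ∧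
    (∃ l ∈ CovChains b t.2.2.1, l.length = 4) ∧
    (∃ l ∈ CovChains t.1 t.2.2.2, l.length = 4) ∧
    (∃ l ∈ CovChains t.2.1 y, l.length = 4) := by
  obtain ⟨hz, hu, hv, hw⟩ := ht
  have E4 : ∃ l ∈ CovChains t.1 y, l.length = 5 := step_down hB hy hz
  have E3 : ∃ l ∈ CovChains t.2.1 y, l.length = 4 := step_down hB E4 hu
  have E2 : ∃ l ∈ CovChains t.2.2.1 y, l.length = 3 := step_down hB E3 hv
  have E1 : ∃ l ∈ CovChains t.2.2.2 y, l.length = 2 := step_down hB E2 hw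
  have hwy : t.2.2.2 ⋖ y := cov_of_len2 E1
  exact ⟨⟨hz.1, hu.1, hv.1⟩, ⟨hu.1, hv.1, hw.1⟩, ⟨hv.1, hw.1, hwy⟩,
    ⟨[b, t.1, t.2.1, t.2.2.1], chain4_mem hz.1 hu.1 hv.1, rfl⟩,
    ⟨[t.1, t.2.1, t.2.2.1, t.2.2.2], chain4_mem hu.1 hv.1 hw.1, rfl⟩, E3⟩

lemma m1_mem {t : P × P × P × P} (ht : t ∈ Qset b y) : m1 b t ∈ Qset b y := by
  obtain ⟨r12, _, _, _, _, _⟩ := Qset_facts hB hA2 hy ht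
  obtain ⟨⟨hbz, hzu, _⟩, _, hne, h2⟩ := Fmap_basic hB hA2 r12
  refine ⟨⟨hbz, hzu.le.trans ht.2.1.2⟩, ⟨hzu, ht.2.1.2⟩, ht.2.2.1, ht.2.2.2⟩

lemma m2_mem {t : P × P × P × P} (ht : t ∈ Qset b y) : m2 t ∈ Qset b y := by
  obtain ⟨_, r23, _, _, _, _⟩ := Qset_facts hB hA2 hy ht
  obtain ⟨⟨hzu, huv, _⟩, _, hne, h2⟩ := Fmap_basic hB hA2 r23
  exact ⟨ht.1, ⟨hzu, huv.le.trans ht.2.2.1.2⟩, ⟨huv, ht.2.2.1.2⟩, ht.2.2.2⟩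

lemma m3_mem {t : P × P × P × P} (ht : t ∈ Qset b y) : m3 t ∈ Qset b y := by
  obtain ⟨_, _, r34, _, _, _⟩ := Qset_facts hB hA2 hy ht
  obtain ⟨⟨huv, hvw, _⟩, _, hne, h2⟩ := Fmap_basic hB hA2 r34
  exact ⟨ht.1, ht.2.1, ⟨huv, hvw.le.trans ht.2.2.2.2⟩, ⟨hvw, ht.2.2.2.2⟩⟩

lemma m4_mem {t : P × P × P × P} (ht : t ∈ Qset b y) : m4 y t ∈ Qset b y := by
  obtain ⟨_, _, r34, _, _, _⟩ := Qset_facts hB hA2 hy ht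
  obtain ⟨⟨_, hvw, hwy⟩, _, hne, h1⟩ := Gmap_basic hB hA2 r34
  exact ⟨ht.1, ht.2.1, ht.2.2.1, ⟨hvw, hwy.le⟩⟩

lemma m1_inv {t : P × P × P × P} (ht : t ∈ Qset b y) : m1 b (m1 b t) = t := by
  obtain ⟨r12, _, _, _, _, _⟩ := Qset_facts hB hA2 hy ht
  have h := (Fmap_basic hB hA2 r12).2.1
  exact congrArg (fun r : P × P => (r.1, r.2, t.2.2)) h

lemma m2_inv {t : P × P × P × P} (ht : t ∈ Qset b y) : m2 (m2 t) = t := by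
  obtain ⟨_, r23, _, _, _, _⟩ := Qset_facts hB hA2 hy ht
  have h := (Fmap_basic (p := t.1) (q := t.2.2.2) hB hA2 r23).2.1
  exact congrArg (fun r : P × P => (t.1, r.1, r.2, t.2.2.2)) h

lemma m3_inv {t : P × P × P × P} (ht : t ∈ Qset b y) : m3 (m3 t) = t := by
  obtain ⟨_, _, r34, _, _, _⟩ := Qset_facts hB hA2 hy ht
  have h := (Fmap_basic (p := t.2.1) (q := y) hB hA2 r34).2.1
  exact congrArg (fun r : P × P => (t.1, t.2.1, r)) h

lemma m4_inv {t : P × P × P × P} (ht : t ∈ Qset b y) : m4 y (m4 y t) = t := by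
  obtain ⟨_, _, r34, _, _, _⟩ := Qset_facts hB hA2 hy ht
  have h := (Gmap_basic (p := t.2.1) (q := y) hB hA2 r34).2.1
  exact congrArg (fun r : P × P => (t.1, t.2.1, r)) h

omit hB hA2 hy

lemma comm13 (t : P × P × P × P) : m1 b (m3 t) = m3 (m1 b t) := rfl
lemma comm14 (t : P × P × P × P) : m1 b (m4 y t) = m4 y (m1 b t) := rfl
lemma comm24 (t : P × P × P × P) : m2 (m4 y t) = m4 y (m2 t) := rfl

include hB hA2 hy

lemma braid12 (hA3 : A 3 = 3) {t : P × P × P × P} (ht : t ∈ Qset b y) :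
    m1 b (m2 (m1 b t)) = m2 (m1 b (m2 t)) := by
  obtain ⟨r12, _, _, hpq12, _, _⟩ := Qset_facts hB hA2 hy ht
  have h := braid_FG hB hA2 hA3 hpq12 r12
  exact congrArg (fun r : P × P => (r.1, r.2, t.2.2)) h

lemma braid23 (hA3 : A 3 = 3) {t : P × P × P × P} (ht : t ∈ Qset b y) :
    m2 (m3 (m2 t)) = m3 (m2 (m3 t)) := by
  obtain ⟨_, r23, _, _, hpq23, _⟩ := Qset_facts hB hA2 hy ht
  have h := braid_FG hB hA2 hA3 hpq23 r23
  exact congrArg (fun r : P × P => (t.1, r.1, r.2, t.2.2.2)) h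

lemma braid34 (hA3 : A 3 = 3) {t : P × P × P × P} (ht : t ∈ Qset b y) :
    m3 (m4 y (m3 t)) = m4 y (m3 (m4 y t)) := by
  obtain ⟨_, _, r34, _, _, hpq34⟩ := Qset_facts hB hA2 hy ht
  have h := braid_FG hB hA2 hA3 hpq34 r34
  exact congrArg (fun r : P × P => (t.1, t.2.1, r)) h

end Scratch

namespace Scratch
variable {P : Type*} [PartialOrder P] {b : P} {A : ℕ → ℕ}
variable (hB : IsBinomialPoset P b A) (hA2 : A 2 = 2) (hA3 : A 3 = 3)
  (hA4 : A 4 = 4) (hA5 : A 5 = 4)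
variable {y : P} (hy : ∃ l ∈ CovChains b y, l.length = 6)
include hB hA2 hA3 hA4 hA5 hy

lemma T3_ncard : ∀ u : P, (∃ l ∈ CovChains u y, l.length = 4) →
    ({r : P × P | r.1 ∈ mids u y ∧ r.2 ∈ mids r.1 y}).ncard = 6 := by
  intro u hu
  have h := ncard_sigma (S := mids u y) (T := fun v => mids v y) (m := 2)
    (mids_finite hB u y) (fun v _ => mids_finite hB v y)
    (fun v hv => by rw [mids_ncard hB one_le_two (step_down hB hu hv), hA2])
  rw [h, mids_ncard hB (by norm_num) hu, hA3]

lemma T4_ncard : ∀ z : P, (∃ l ∈ CovChains z y, l.length = 5) →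
    ({s : P × P × P | s.1 ∈ mids z y ∧ s.2.1 ∈ mids s.1 y ∧ s.2.2 ∈ mids s.2.1 y}).ncard
      = 24 := by
  intro z hz
  have h := ncard_sigma (S := mids z y)
    (T := fun u => {r : P × P | r.1 ∈ mids u y ∧ r.2 ∈ mids r.1 y}) (m := 6)
    (mids_finite hB z y)
    (fun u _ => sigma_finite (mids_finite hB u y) (fun v _ => mids_finite hB v y))
    (fun u hu => T3_ncard hB hA2 hA3 hA4 hA5 hy u (step_down hB hz hu))
  have h2 : ({s : P × P × P | s.1 ∈ mids z y ∧ s.2.1 ∈ mids s.1 y ∧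
      s.2.2 ∈ mids s.2.1 y}).ncard = (mids z y).ncard * 6 := h
  rw [h2, mids_ncard hB (by norm_num) hz, hA4]

lemma Qset_ncard : (Qset b y).ncard = 96 := by
  have h := ncard_sigma (S := mids b y)
    (T := fun z => {s : P × P × P | s.1 ∈ mids z y ∧ s.2.1 ∈ mids s.1 y ∧
      s.2.2 ∈ mids s.2.1 y}) (m := 24)
    (mids_finite hB b y)
    (fun z _ => sigma_finite (mids_finite hB z y)
      (fun u _ => sigma_finite (mids_finite hB u y) (fun v _ => mids_finite hB v y)))
    (fun z hz => T4_ncard hB hA2 hA3 hA4 hA5 hy z (step_down hB hy hz))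
  have : (Qset b y).ncard = (mids b y).ncard * 24 := h
  rw [this, mids_ncard hB (by norm_num) hy, hA5]

lemma Qset_finite : (Qset b y).Finite := by
  exact sigma_finite (mids_finite hB b y)
    (fun z _ => sigma_finite (mids_finite hB z y)
      (fun u _ => sigma_finite (mids_finite hB u y) (fun v _ => mids_finite hB v y)))

end Scratch

namespace Scratch
variable {P : Type*} [PartialOrder P] {b : P} {A : ℕ → ℕ}

noncomputable def sig1 (hB : IsBinomialPoset P b A) (hA2 : A 2 = 2) {y : P}
    (hy : ∃ l ∈ CovChains b y, l.length = 6) :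
    ↥(Qset b y) → ↥(Qset b y) := fun t => ⟨m1 b t.1, m1_mem hB hA2 hy t.2⟩
noncomputable def sig2 (hB : IsBinomialPoset P b A) (hA2 : A 2 = 2) {y : P}
    (hy : ∃ l ∈ CovChains b y, l.length = 6) :
    ↥(Qset b y) → ↥(Qset b y) := fun t => ⟨m2 t.1, m2_mem hB hA2 hy t.2⟩
noncomputable def sig3 (hB : IsBinomialPoset P b A) (hA2 : A 2 = 2) {y : P}
    (hy : ∃ l ∈ CovChains b y, l.length = 6) :
    ↥(Qset b y) → ↥(Qset b y) := fun t => ⟨m3 t.1, m3_mem hB hA2 hy t.2⟩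
noncomputable def sig4 (hB : IsBinomialPoset P b A) (hA2 : A 2 = 2) {y : P}
    (hy : ∃ l ∈ CovChains b y, l.length = 6) :
    ↥(Qset b y) → ↥(Qset b y) := fun t => ⟨m4 y t.1, m4_mem hB hA2 hy t.2⟩

theorem binom_fivefour_false (hB : IsBinomialPoset P b A) (hA2 : A 2 = 2)
    (hA3 : A 3 = 3) (hA4 : A 4 = 4) (hA5 : A 5 = 4) : False := by
  classical
  obtain ⟨y, hy0⟩ := hB.allLengths 5
  have hy : ∃ l ∈ CovChains b y, l.length = 6 := hy0
  have hQfin : (Qset b y).Finite := Qset_finite hB hA2 hA3 hA4 hA5 hy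
  haveI : Fintype ↥(Qset b y) := hQfin.fintype
  set s1 := sig1 hB hA2 hy with hs1def
  set s2 := sig2 hB hA2 hy with hs2def
  set s3 := sig3 hB hA2 hy with hs3def
  set s4 := sig4 hB hA2 hy with hs4def
  have hs1 : ∀ x, s1 (s1 x) = x := fun x => Subtype.ext (m1_inv hB hA2 hy x.2)
  have hs2 : ∀ x, s2 (s2 x) = x := fun x => Subtype.ext (m2_inv hB hA2 hy x.2)
  have hs3 : ∀ x, s3 (s3 x) = x := fun x => Subtype.ext (m3_inv hB hA2 hy x.2)
  have hs4 : ∀ x, s4 (s4 x) = x := fun x => Subtype.ext (m4_inv hB hA2 hy x.2)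
  have hab : ∀ x, s1 (s2 (s1 x)) = s2 (s1 (s2 x)) :=
    fun x => Subtype.ext (braid12 hB hA2 hy hA3 x.2)
  have hbc : ∀ x, s2 (s3 (s2 x)) = s3 (s2 (s3 x)) :=
    fun x => Subtype.ext (braid23 hB hA2 hy hA3 x.2)
  have hcd : ∀ x, s3 (s4 (s3 x)) = s4 (s3 (s4 x)) :=
    fun x => Subtype.ext (braid34 hB hA2 hy hA3 x.2)
  have hac : ∀ x, s1 (s3 x) = s3 (s1 x) := fun x => Subtype.ext rfl
  have had : ∀ x, s1 (s4 x) = s4 (s1 x) := fun x => Subtype.ext rfl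
  have hbd : ∀ x, s2 (s4 x) = s4 (s2 x) := fun x => Subtype.ext rfl
  have hw := word_identity s1 s2 s3 s4 hs1 hs2 hs3 hs4 hab hbc hcd hac had hbd
  have hgl : ∀ x, s4 (s3 (s2 (s1 (s1 (s2 (s3 (s4 x))))))) = x := by
    intro x; rw [hs1, hs2, hs3, hs4]
  have hgr : ∀ x, s1 (s2 (s3 (s4 (s4 (s3 (s2 (s1 x))))))) = x := by
    intro x; rw [hs4, hs3, hs2, hs1]
  set σ : Equiv.Perm ↥(Qset b y) :=
    ⟨fun x => s1 (s2 (s3 (s4 x))), fun x => s4 (s3 (s2 (s1 x))), hgl, hgr⟩ with hσdef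
  have hσapp : ∀ x, σ x = s1 (s2 (s3 (s4 x))) := fun _ => rfl
  have hσ5 : σ ^ 5 = 1 := by
    apply Equiv.ext
    intro x
    have h5 : (σ ^ 5) x = σ (σ (σ (σ (σ x)))) := by
      simp [pow_succ, Equiv.Perm.mul_apply]
    rw [Equiv.Perm.one_apply, h5, hσapp, hσapp, hσapp, hσapp, hσapp]
    exact hw x
  have hfpf : ∀ x, σ x ≠ x := by
    intro x hx
    have h1 : (σ x).1.1 = x.1.1 := by rw [hx]
    set t' := (s2 (s3 (s4 x))).1 with ht'def
    have ht' : t' ∈ Qset b y := (s2 (s3 (s4 x))).2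
    have hch : ∃ l ∈ CovChains b t'.2.1, l.length = 3 :=
      ⟨[b, t'.1, t'.2.1], chain3_mem ht'.1.1 ht'.2.1.1, rfl⟩
    have hc2 : (mids b t'.2.1).ncard = 2 := by
      rw [mids_ncard hB one_le_two hch, hA2]
    have hmem : t'.1 ∈ mids b t'.2.1 := ⟨ht'.1.1, ht'.2.1.1.le⟩
    have hne := (otherMid_spec hc2 hmem).2.1
    have h2 : (σ x).1.1 = otherMid b t'.2.1 t'.1 := rfl
    have h3 : x.1.1 = t'.1 := rfl
    rw [h2, h3] at h1
    exact hne h1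
  have hQ96 : (Qset b y).ncard = 96 := Qset_ncard hB hA2 hA3 hA4 hA5 hy
  have hQne : (Qset b y).Nonempty := by
    rw [← Set.ncard_pos hQfin, hQ96]; norm_num
  obtain ⟨t0, ht0⟩ := hQne
  have hσne1 : σ ≠ 1 := by
    intro h
    exact hfpf ⟨t0, ht0⟩ (by rw [h]; rfl)
  have hord : orderOf σ = 5 := by
    have hdvd := orderOf_dvd_of_pow_eq_one hσ5
    rcases (by norm_num : Nat.Prime 5).eq_one_or_self_of_dvd _ hdvd with h | h
    · exact absurd (orderOf_eq_one_iff.mp h) hσne1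
    · exact h
  have hsup : σ.support = Finset.univ := by
    ext x
    simp [Equiv.Perm.mem_support, hfpf x]
  have hdvd5 : (5 : ℕ) ∣ Fintype.card ↥(Qset b y) := by
    have hsum := σ.sum_cycleType
    rw [hsup, Finset.card_univ] at hsum
    rw [← hsum]
    refine Multiset.dvd_sum ?_
    intro n hn
    have h2n := Equiv.Perm.two_le_of_mem_cycleType hn
    have hdl : n ∣ orderOf σ := by
      rw [← Equiv.Perm.lcm_cycleType]; exact Multiset.dvd_lcm hn
    rw [hord] at hdl
    rcases (by norm_num : Nat.Prime 5).eq_one_or_self_of_dvd _ hdl with h | h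
    · omega
    · rw [h]
  have hcard : Fintype.card ↥(Qset b y) = 96 := by
    rw [← Nat.card_eq_fintype_card, Nat.card_coe_set_eq, hQ96]
  rw [hcard] at hdvd5
  norm_num at hdvd5

end Scratch

namespace Scratch

lemma B_zero : Bfun A616 0 = 1 := by simp [Bfun]
lemma B_succ (n : ℕ) : Bfun A616 (n + 1) = Bfun A616 n * A616 (n + 1) :=
  by unfold Bfun; exact Finset.prod_Icc_succ_top (by omega) _

lemma B_one : Bfun A616 1 = 1 := by rw [B_succ, B_zero]; rfl
lemma B_two : Bfun A616 2 = 2 := by rw [B_succ, B_one]; rfl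
lemma B_three : Bfun A616 3 = 6 := by rw [B_succ, B_two]; rfl
lemma B_four : Bfun A616 4 = 24 := by rw [B_succ, B_three]; rfl
lemma B_five : Bfun A616 5 = 96 := by rw [B_succ, B_four]; rfl

lemma A616_eq6 {k : ℕ} (hk : 6 ≤ k) : A616 k = 6 := by
  unfold A616; split_ifs <;> omega

lemma A616_pos {k : ℕ} (hk : 1 ≤ k) : 0 < A616 k := by
  unfold A616; split_ifs <;> omega

lemma B_pos (n : ℕ) : 0 < Bfun A616 n := by
  unfold Bfun
  refine Finset.prod_pos ?_
  intro i hi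
  simp only [Finset.mem_Icc] at hi
  exact A616_pos hi.1

lemma B_ge5 : ∀ j, 5 ≤ j → Bfun A616 j = 96 * 6 ^ (j - 5) := by
  intro j hj
  induction j, hj using Nat.le_induction with
  | base => simpa using B_five
  | succ n hn ih =>
      rw [B_succ, ih, A616_eq6 (by omega)]
      have : n + 1 - 5 = (n - 5) + 1 := by omega
      rw [this, pow_succ]
      ring

lemma B_dvd_pow6 : ∀ i, Bfun A616 i ∣ 6 ^ i := by
  intro i
  by_cases hi : i ≤ 5
  · interval_cases i
    · simp [B_zero]
    · rw [B_one]; exact one_dvd _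
    · rw [B_two]; norm_num
    · rw [B_three]; norm_num
    · rw [B_four]; norm_num
    · rw [B_five]; norm_num
  · rw [B_ge5 i (by omega)]
    have h6 : (6 : ℕ) ^ i = 6 ^ 5 * 6 ^ (i - 5) := by
      rw [← pow_add]
      congr 1
      omega
    rw [h6]
    exact Nat.mul_dvd_mul (by norm_num) dvd_rfl

/-- the divisibility when the second index is large -/
lemma Bmul_dvd_big {i j : ℕ} (hj : 5 ≤ j) :
    Bfun A616 i * Bfun A616 j ∣ Bfun A616 (i + j) := by
  rw [B_ge5 j hj, B_ge5 (i + j) (by omega)]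
  have h1 : 6 ^ (i + j - 5) = 6 ^ i * 6 ^ (j - 5) := by
    rw [← pow_add]
    congr 1
    omega
  rw [h1]
  have := Nat.mul_dvd_mul (B_dvd_pow6 i) (dvd_refl (96 * 6 ^ (j - 5)))
  calc Bfun A616 i * (96 * 6 ^ (j - 5)) ∣ 6 ^ i * (96 * 6 ^ (j - 5)) := this
    _ = 96 * (6 ^ i * 6 ^ (j - 5)) := by ring

lemma Bmul_dvd (i j : ℕ) : Bfun A616 i * Bfun A616 j ∣ Bfun A616 (i + j) := by
  by_cases hj : 5 ≤ j
  · exact Bmul_dvd_big hj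
  · by_cases hi : 5 ≤ i
    · rw [mul_comm, Nat.add_comm]
      exact Bmul_dvd_big hi
    · push_neg at hi hj
      interval_cases i <;> interval_cases j <;>
        simp_all [B_zero, B_one, B_two, B_three, B_four, B_five,
          show (0:ℕ)+0 = 0 from rfl] <;>
        first
        | rfl
        | (rw [show Bfun A616 6 = 576 from by rw [B_succ, B_five]; rfl] <;> norm_num)
        | (rw [show Bfun A616 7 = 3456 from by
              rw [B_succ, B_succ, B_five] <;> rfl] <;> norm_num)
        | (rw [show Bfun A616 8 = 20736 from by
              rw [B_succ, B_succ, B_succ, B_five] <;> rfl] <;> norm_num)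
        | norm_num [B_ge5]

end Scratch

namespace Scratch

lemma cond1_A616 : Cond1 A616 := by
  refine ⟨rfl, ?_, ?_, ?_⟩
  · intro i hi
    exact A616_pos hi
  · intro i hi
    unfold A616
    split_ifs <;> omega
  · intro i j hi hj
    have hIcc : ∀ n : ℕ, Finset.Icc 1 n = Finset.Ioc 0 n := fun n => rfl
    have hkey : Bfun A616 j * (∏ l ∈ Finset.Icc (j + 1) (j + i), A616 l) =
        Bfun A616 (j + i) := by
      rw [Bfun, Bfun, hIcc, hIcc, Finset.Icc_add_one_left_eq_Ioc]
      exact Finset.prod_Ioc_consecutive _ (Nat.zero_le j) (by omega)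
    have hdvd := Bmul_dvd i j
    rw [Nat.add_comm i j, ← hkey, mul_comm (Bfun A616 i) (Bfun A616 j)] at hdvd
    exact (Nat.mul_dvd_mul_iff_left (B_pos j)).mp hdvd

end Scratch

/-- the sequence `(1,2,3,4²,6^∞)` satisfies the binomial compatibility
condition (1) but is not realisable as the atomic sequence of any binomial poset. -/
theorem A616_cond1_not_realisable :
    Cond1 A616 ∧ ¬ ∃ X : BinPoset, IsBinomialPoset X.carrier X.bot A616 := by
  constructor
  · exact Scratch.cond1_A616
  · rintro ⟨X, hX⟩
    exact Scratch.binom_fivefour_false hX rfl rfl rfl rfl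
end
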